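/- arXiv:1010.4847 — 11 statements merged into one kernel-verified Lean document; each statement's English description precedes it below -/
import Mathlib

section
/- The number of walks on ℤ of length 2n starting at 0, with steps +1 or -1, that never visit a negative number equals the central binomial coefficient C(2n, n). -/
/-!
Let `U(m, h)` count the ±1 walks of length `m` that never go negative and end at height at
least `h`. Splitting off the last step gives `U(m + 1, h) = U(m, h - 1) + U(m, max 1 (h + 1))`,
which away from the boundary is Pascal's rule, so `U(m, 2t - m) = C(m, t)` for `m ≤ 2t`. The one
boundary case, `m = 2s + 1` odd, uses that a walk of odd length cannot end at `0`, together with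
`C(2s + 1, s) = C(2s + 1, s + 1)`. A nonnegative walk ends at height `≥ 0`, so the number of
nonnegative walks of length `2n` is `U(2n, 0) = C(2n, n)`.
-/

/-- Partial sum of the first `k` steps of a walk `w` of length `n`. -/
def psum {n : ℕ} (w : Fin n → ℤ) (k : ℕ) : ℤ :=
  ∑ i ∈ Finset.univ.filter (fun i : Fin n => (i : ℕ) < k), w i

open Finset Fintype

open scoped Classical

theorem card_filter_piFinset_snoc {α : Type*} {m : ℕ} (s : Finset α)
    (P : (Fin (m + 1) → α) → Prop) [DecidablePred P] :
    #{r ∈ piFinset fun _ => s | P r} =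
      ∑ x ∈ s, #{v ∈ piFinset fun _ => s | P (Fin.snoc v x)} := by
  have h := filter_piFinset_eq_map_snocEquiv (fun _ : Fin (m + 1) => s) fun _ => True
  simp only [filter_true] at h
  rw [h, filter_map, card_map, card_filter, sum_product]
  simp only [card_filter]
  rfl

section Walks

variable {m : ℕ}

lemma psum_snoc (v : Fin m → ℤ) (x : ℤ) (k : ℕ) :
    psum (Fin.snoc v x : Fin (m + 1) → ℤ) k = psum v k + if m < k then x else 0 := by
  simp [psum, sum_filter, Fin.sum_univ_castSucc]

lemma psum_of_le (w : Fin m → ℤ) {k : ℕ} (hk : m ≤ k) : psum w k = ∑ i, w i := by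
  rw [psum, filter_true_of_mem fun i _ => i.isLt.trans_le hk]

def walks (m : ℕ) : Finset (Fin m → ℤ) := piFinset fun _ => {1, -1}

def StaysNonneg (w : Fin m → ℤ) : Prop := ∀ k, 0 ≤ psum w k

lemma StaysNonneg.sum_nonneg {w : Fin m → ℤ} (hw : StaysNonneg w) : 0 ≤ ∑ i, w i :=
  psum_of_le w le_rfl ▸ hw m

lemma staysNonneg_snoc_iff {v : Fin m → ℤ} {x : ℤ} :
    StaysNonneg (Fin.snoc v x : Fin (m + 1) → ℤ) ↔ StaysNonneg v ∧ 0 ≤ ∑ i, v i + x := by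
  simp only [StaysNonneg, psum_snoc]
  refine ⟨fun h => ⟨fun k => ?_, by simpa [psum_of_le] using h (m + 1)⟩, fun ⟨hv, hx⟩ k => ?_⟩
  · rcases le_or_gt k m with hk | hk
    · simpa [hk.not_gt] using h k
    · simpa [psum_of_le v hk.le, psum_of_le v le_rfl] using h m
  · split_ifs with hk
    · rwa [psum_of_le v hk.le]
    · simpa using hv k

lemma sum_modEq_length {w : Fin m → ℤ} (hw : w ∈ walks m) : ∑ i, w i ≡ m [ZMOD 2] := by
  have hstep : ∀ i ∈ univ, w i ≡ 1 [ZMOD 2] := by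
    intro i _
    rcases (by simpa using mem_piFinset.1 hw i : w i = 1 ∨ w i = -1) with h | h <;>
      simp [h, Int.ModEq]
  simpa using Int.ModEq.sum hstep

noncomputable def nonnegWalksAbove (m : ℕ) (h : ℤ) : Finset (Fin m → ℤ) :=
  {w ∈ walks m | StaysNonneg w ∧ h ≤ ∑ i, w i}

lemma card_nonnegWalksAbove_succ (h : ℤ) :
    #(nonnegWalksAbove (m + 1) h) =
      #(nonnegWalksAbove m (h - 1)) + #(nonnegWalksAbove m (max 1 (h + 1))) := by
  rw [nonnegWalksAbove, walks, card_filter_piFinset_snoc, sum_pair (by decide)]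
  simp only [staysNonneg_snoc_iff, Fin.sum_univ_castSucc, Fin.snoc_castSucc, Fin.snoc_last,
    nonnegWalksAbove, walks, max_le_iff, and_assoc]
  congr 1 <;> congr 1 <;> refine filter_congr fun v _ => and_congr_right fun hv => ?_ <;>
    have := hv.sum_nonneg <;> constructor <;> intro <;> omega

lemma nonnegWalksAbove_odd_neg_one (s : ℕ) :
    nonnegWalksAbove (2 * s + 1) (-1) = nonnegWalksAbove (2 * s + 1) 1 := by
  ext w
  simp only [nonnegWalksAbove, mem_filter, and_congr_right_iff]
  intro hw hnn
  have hodd := sum_modEq_length hw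
  have := hnn.sum_nonneg
  rw [Int.ModEq] at hodd
  push_cast at hodd
  omega

end Walks

theorem card_nonnegWalksAbove (m t : ℕ) (hmt : m ≤ 2 * t) :
    #(nonnegWalksAbove m (2 * t - m)) = m.choose t := by
  induction m generalizing t with
  | zero =>
    cases t with
    | zero => simp [nonnegWalksAbove, walks, StaysNonneg, psum]
    | succ t => simp [nonnegWalksAbove, walks]
  | succ m ih =>
    obtain ⟨s, rfl⟩ : ∃ s, t = s + 1 := ⟨t - 1, by omega⟩
    rw [card_nonnegWalksAbove_succ]
    rcases (by omega : m ≤ 2 * s ∨ m = 2 * s + 1) with hm | rfl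
    · rw [max_eq_right (by omega), Nat.choose_succ_succ', ← ih s hm, ← ih (s + 1) (by omega)]
      congr 3 <;> omega
    · have h1 : 2 * ((s + 1 : ℕ) : ℤ) - ((2 * s + 1 + 1 : ℕ) : ℤ) - 1 = -1 := by omega
      have h2 : max 1 (2 * ((s + 1 : ℕ) : ℤ) - ((2 * s + 1 + 1 : ℕ) : ℤ) + 1) = 1 := by omega
      have h3 : 2 * ((s + 1 : ℕ) : ℤ) - ((2 * s + 1 : ℕ) : ℤ) = 1 := by omega
      rw [h1, h2, nonnegWalksAbove_odd_neg_one, ← h3, ih (s + 1) (by omega),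
        Nat.choose_succ_succ' (2 * s + 1) s, Nat.choose_symm_half]

theorem stmt0 (n : ℕ) :
    {w : Fin (2 * n) → ℤ |
        (∀ i, w i = 1 ∨ w i = -1) ∧ (∀ k, 0 ≤ psum w k)}.ncard
      = Nat.choose (2 * n) n := by
  have hset : {w : Fin (2 * n) → ℤ | (∀ i, w i = 1 ∨ w i = -1) ∧ (∀ k, 0 ≤ psum w k)} =
      nonnegWalksAbove (2 * n) (2 * n - (2 * n : ℕ)) := by
    ext w
    simp only [Set.mem_ofPred_eq, nonnegWalksAbove, walks, coe_filter, mem_piFinset,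
      mem_insert, mem_singleton, Nat.cast_mul, Nat.cast_ofNat, sub_self]
    exact and_congr_right fun _ => (and_iff_left_of_imp StaysNonneg.sum_nonneg).symm
  rw [hset, Set.ncard_coe_finset, card_nonnegWalksAbove _ _ le_rfl]
end

section
/- The number of ±1-walks of length n starting at 0 that end at 0 or 1 equals the number of ±1-walks of length n starting at 0 whose partial sums are all nonnegative; both equal C(n, ⌈n/2⌉). -/
open Finset

namespace PlusMinusWalk

variable {n : ℕ}

def walks (n : ℕ) : Finset (Fin n → ℤ) := Fintype.piFinset fun _ => {1, -1}

lemma mem_walks {w : Fin n → ℤ} : w ∈ walks n ↔ ∀ i, w i = 1 ∨ w i = -1 := by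
  simp [walks]

lemma ncard_setOf_walks (Q : (Fin n → ℤ) → Prop) [DecidablePred Q] :
    {w : Fin n → ℤ | (∀ i, w i = 1 ∨ w i = -1) ∧ Q w}.ncard = #{w ∈ walks n | Q w} := by
  rw [← Set.ncard_coe_finset, coe_filter]
  simp only [mem_walks]

lemma card_filter_walks_succ (P : (Fin (n + 1) → ℤ) → Prop) [DecidablePred P] :
    #{w ∈ walks (n + 1) | P w}
      = #{w ∈ walks n | P (Fin.snoc w 1)} + #{w ∈ walks n | P (Fin.snoc w (-1))} := by
  have hwalks : walks (n + 1)
      = (({1, -1} : Finset ℤ) ×ˢ walks n).map (Fin.snocEquiv fun _ => ℤ).toEmbedding := by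
    have := filter_piFinset_eq_map_snocEquiv (fun _ : Fin (n + 1) => ({1, -1} : Finset ℤ))
      (fun _ => True)
    simp only [filter_true] at this
    exact this
  rw [hwalks, filter_map, card_map, card_filter, sum_product, sum_pair (by norm_num),
    card_filter, card_filter]
  rfl

lemma psum_of_le (w : Fin n → ℤ) {k : ℕ} (hk : n ≤ k) : psum w k = ∑ i, w i := by
  rw [psum, filter_true_of_mem fun i _ => i.isLt.trans_le hk]

lemma psum_snoc (w : Fin n → ℤ) (x : ℤ) (k : ℕ) :
    psum (Fin.snoc w x : Fin (n + 1) → ℤ) k = psum w k + if n < k then x else 0 := by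
  simp only [psum, sum_filter, Fin.sum_univ_castSucc, Fin.snoc_castSucc, Fin.snoc_last,
    Fin.val_castSucc, Fin.val_last]

lemma psum_snoc_self (w : Fin n → ℤ) (x : ℤ) :
    psum (Fin.snoc w x : Fin (n + 1) → ℤ) (n + 1) = psum w n + x := by
  rw [psum_snoc, if_pos n.lt_succ_self, psum_of_le w n.le_succ, psum_of_le w le_rfl]

lemma sum_eq_two_mul_card_up_sub {w : Fin n → ℤ} (hw : w ∈ walks n) :
    ∑ i, w i = 2 * #{i | w i = 1} - n := by
  have hstep : ∀ i, w i = 2 * (if w i = 1 then 1 else 0) - 1 := fun i => by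
    rcases mem_walks.mp hw i with h | h <;> simp [h]
  rw [sum_congr rfl fun i _ => hstep i, sum_sub_distrib, ← mul_sum, sum_boole]
  simp

lemma card_walks_up_eq_choose (k : ℕ) :
    #{w ∈ walks n | #{i | w i = 1} = k} = n.choose k := by
  rw [show n.choose k = #(powersetCard k (univ : Finset (Fin n))) by simp]
  refine card_nbij' (fun w => ({i | w i = 1} : Finset (Fin n)))
    (fun s i => if i ∈ s then 1 else -1) ?_ ?_ ?_ ?_
  · intro w hw
    simp_all [mem_powersetCard]
  · intro s hs
    simp_all [mem_walks, em]
  · intro w hw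
    funext i
    rcases mem_walks.mp (mem_filter.mp hw).1 i with h | h <;> simp [h]
  · intro s _
    ext i
    simp

lemma card_walks_endpoint_zero_or_one :
    #{w ∈ walks n | psum w n = 0 ∨ psum w n = 1} = n.choose ((n + 1) / 2) := by
  rw [← card_walks_up_eq_choose]
  refine congrArg card (filter_congr fun w hw => ?_)
  rw [psum_of_le w le_rfl, sum_eq_two_mul_card_up_sub hw]
  omega

def IsNonneg (w : Fin n → ℤ) : Prop := ∀ k, 0 ≤ psum w k

lemma isNonneg_snoc_iff {w : Fin n → ℤ} {x : ℤ} :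
    IsNonneg (Fin.snoc w x : Fin (n + 1) → ℤ) ↔ IsNonneg w ∧ 0 ≤ psum w n + x := by
  have hend : ∀ k, n ≤ k → psum w k = psum w n := fun k hk => by
    rw [psum_of_le w hk, psum_of_le w le_rfl]
  refine ⟨fun h => ⟨fun k => ?_, psum_snoc_self w x ▸ h (n + 1)⟩,
    fun ⟨hw, hx⟩ k => ?_⟩
  · rcases le_or_gt k n with hk | hk
    · simpa [psum_snoc, hk.not_gt] using h k
    · simpa [hend k hk.le, psum_snoc] using h n
  · rw [psum_snoc]
    split_ifs with hk
    · rwa [hend k hk.le]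
    · simpa using hw k

open scoped Classical in
noncomputable def numNonnegWalksGE (n : ℕ) (h : ℤ) : ℕ :=
  #{w ∈ walks n | IsNonneg w ∧ h ≤ psum w n}

lemma numNonnegWalksGE_of_nonpos {h : ℤ} (hh : h ≤ 0) :
    numNonnegWalksGE n h = numNonnegWalksGE n 0 := by
  classical
  unfold numNonnegWalksGE
  refine congrArg card (filter_congr fun w _ => ?_)
  exact ⟨fun ⟨hw, _⟩ => ⟨hw, hw n⟩, fun ⟨hw, _⟩ => ⟨hw, hh.trans (hw n)⟩⟩

lemma numNonnegWalksGE_zero_left (h : ℕ) : numNonnegWalksGE 0 h = if h = 0 then 1 else 0 := by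
  have hpsum : ∀ (w : Fin 0 → ℤ) k, psum w k = 0 := fun w k => by simp [psum]
  split_ifs with hh
  · simp [numNonnegWalksGE, IsNonneg, hpsum, hh, walks]
  · simp [numNonnegWalksGE, hpsum, hh]

lemma numNonnegWalksGE_succ {h : ℤ} (hh : 0 ≤ h) :
    numNonnegWalksGE (n + 1) h = numNonnegWalksGE n (h - 1) + numNonnegWalksGE n (h + 1) := by
  classical
  unfold numNonnegWalksGE
  rw [card_filter_walks_succ]
  simp only [isNonneg_snoc_iff, psum_snoc_self, and_assoc]
  congr 2 <;> exact filter_congr fun w _ => and_congr_right fun hw => by have := hw n; omega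

lemma _root_.Nat.choose_half_add_choose_half_succ (n : ℕ) :
    n.choose ((n + 1) / 2) + n.choose (n / 2 + 1) = (n + 1).choose (n / 2 + 1) := by
  rcases Nat.even_or_odd' n with ⟨m, rfl | rfl⟩
  · rw [show (2 * m + 1) / 2 = m by omega, show 2 * m / 2 = m by omega, Nat.choose_succ_succ']
  · rw [show (2 * m + 1 + 1) / 2 = m + 1 by omega, show (2 * m + 1) / 2 = m by omega,
      Nat.choose_succ_succ' (2 * m + 1) m, Nat.choose_symm_half]

lemma numNonnegWalksGE_eq_choose (n h : ℕ) :
    numNonnegWalksGE n h = n.choose ((n + h + 1) / 2) := by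
  induction n generalizing h with
  | zero =>
    rw [numNonnegWalksGE_zero_left]
    rcases h with _ | h
    · rfl
    · rw [if_neg h.succ_ne_zero, Nat.choose_eq_zero_of_lt (by omega)]
  | succ n ih =>
    cases h with
    | zero =>
      have h0 : numNonnegWalksGE n 0 = n.choose ((n + 1) / 2) := by exact_mod_cast ih 0
      have h1 : numNonnegWalksGE n 1 = n.choose (n / 2 + 1) := by
        rw [show n / 2 + 1 = (n + 1 + 1) / 2 by omega]; exact_mod_cast ih 1
      rw [Nat.cast_zero, numNonnegWalksGE_succ le_rfl, numNonnegWalksGE_of_nonpos (by norm_num),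
        zero_add, h0, h1, Nat.choose_half_add_choose_half_succ]
      congr 1
      omega
    | succ h =>
      rw [numNonnegWalksGE_succ (by positivity),
        show ((h + 1 : ℕ) : ℤ) - 1 = h by push_cast; ring,
        show ((h + 1 : ℕ) : ℤ) + 1 = ((h + 2 : ℕ) : ℤ) by push_cast; ring, ih, ih,
        show (n + (h + 2) + 1) / 2 = (n + h + 1) / 2 + 1 by omega,
        show (n + 1 + (h + 1) + 1) / 2 = (n + h + 1) / 2 + 1 by omega, Nat.choose_succ_succ']

open scoped Classical in
lemma card_walks_isNonneg : #{w ∈ walks n | IsNonneg w} = n.choose ((n + 1) / 2) := by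
  rw [← numNonnegWalksGE_eq_choose n 0, numNonnegWalksGE, Nat.cast_zero]
  exact congrArg card (filter_congr fun w _ => ⟨fun hw => ⟨hw, hw n⟩, And.left⟩)

end PlusMinusWalk

open PlusMinusWalk in
theorem stmt4 (n : ℕ) :
    {w : Fin n → ℤ |
        (∀ i, w i = 1 ∨ w i = -1) ∧ (psum w n = 0 ∨ psum w n = 1)}.ncard
      = {w : Fin n → ℤ |
          (∀ i, w i = 1 ∨ w i = -1) ∧ (∀ k, 0 ≤ psum w k)}.ncard
    ∧ {w : Fin n → ℤ |
        (∀ i, w i = 1 ∨ w i = -1) ∧ (psum w n = 0 ∨ psum w n = 1)}.ncard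
      = Nat.choose n ((n + 1) / 2) := by
  classical
  rw [ncard_setOf_walks, card_walks_endpoint_zero_or_one]
  exact ⟨((ncard_setOf_walks IsNonneg).trans card_walks_isNonneg).symm, rfl⟩
end

section
/- There is a bijection between the set of ±1-walks of length n starting at 0 and ending in {0,1}, and the set of ±1-walks of length n starting at 0 with all partial sums nonnegative, which maps a walk with endpoint e ∈ {0,1} and minimum value −d to a positive walk ending at 2d+e. -/
/-- The minimum of the partial sums s_0, ..., s_n of a walk of length n. -/
def minval {n : ℕ} (w : Fin n → ℤ) : ℤ :=
  ((Finset.range (n + 1)).image (psum w)).min' (by simp)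

/-!
Let `s` be the height sequence of a walk and `m k = min_{j ≤ k} s j` its running minimum.
Reflecting every step that reaches a new minimum gives the walk with heights
`s k - 2 m k ≥ -m k ≥ 0`. When `s n ∈ {0, 1}`, the running minimum is recovered from the reflected
heights `p` as the capped future minimum `-m k = min (p n / 2, min_{k ≤ j ≤ n} p j)`; conversely,
for a nonnegative walk `p` the heights `p k - 2 F k`, with `F` this capped future minimum, have
running minimum `-F`. So the two reflections are mutually inverse.
-/

namespace WalkReflection

variable {n : ℕ}

section Heights

def UnitSteps (n : ℕ) (s : ℕ → ℤ) : Prop :=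
  ∀ k < n, s (k + 1) = s k + 1 ∨ s (k + 1) = s k - 1

def prefixMin (s : ℕ → ℤ) (k : ℕ) : ℤ :=
  ((Finset.range (k + 1)).image s).min' (by simp)

def cappedSuffixMin (s : ℕ → ℤ) (n : ℕ) (d : ℤ) (k : ℕ) : ℤ :=
  (insert d ((Finset.Icc k n).image s)).min' (Finset.insert_nonempty _ _)

variable {s : ℕ → ℤ} {d : ℤ} {j k : ℕ}

lemma prefixMin_le (h : j ≤ k) : prefixMin s k ≤ s j :=
  Finset.min'_le _ _ (Finset.mem_image_of_mem _ (Finset.mem_range.2 (by omega)))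

lemma le_prefixMin {a : ℤ} (h : ∀ j ≤ k, a ≤ s j) : a ≤ prefixMin s k := by
  refine Finset.le_min' _ _ _ fun y hy => ?_
  obtain ⟨j, hj, rfl⟩ := Finset.mem_image.1 hy
  exact h j (Nat.lt_succ_iff.1 (Finset.mem_range.1 hj))

lemma prefixMin_zero : prefixMin s 0 = s 0 := by
  simp [prefixMin]

lemma prefixMin_succ : prefixMin s (k + 1) = min (prefixMin s k) (s (k + 1)) := by
  simp only [prefixMin, Finset.range_add_one (n := k + 1), Finset.image_insert]
  rw [Finset.min'_insert _ _ (by simp), min_comm]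

lemma prefixMin_antitone (h : j ≤ k) : prefixMin s k ≤ prefixMin s j :=
  le_prefixMin fun _ hi => prefixMin_le (hi.trans h)

lemma cappedSuffixMin_le_cap : cappedSuffixMin s n d k ≤ d :=
  Finset.min'_le _ _ (Finset.mem_insert_self _ _)

lemma cappedSuffixMin_le (hkj : k ≤ j) (hjn : j ≤ n) : cappedSuffixMin s n d k ≤ s j :=
  Finset.min'_le _ _ (Finset.mem_insert_of_mem
    (Finset.mem_image_of_mem _ (Finset.mem_Icc.2 ⟨hkj, hjn⟩)))

lemma le_cappedSuffixMin {a : ℤ} (hd : a ≤ d) (h : ∀ j, k ≤ j → j ≤ n → a ≤ s j) :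
    a ≤ cappedSuffixMin s n d k := by
  refine Finset.le_min' _ _ _ fun y hy => ?_
  rcases Finset.mem_insert.1 hy with rfl | hy
  · exact hd
  · obtain ⟨j, hj, rfl⟩ := Finset.mem_image.1 hy
    exact h j (Finset.mem_Icc.1 hj).1 (Finset.mem_Icc.1 hj).2

lemma cappedSuffixMin_mono (h : j ≤ k) : cappedSuffixMin s n d j ≤ cappedSuffixMin s n d k :=
  le_cappedSuffixMin cappedSuffixMin_le_cap fun _ hi hin => cappedSuffixMin_le (h.trans hi) hin

lemma cappedSuffixMin_eq_min (hk : k ≤ n) :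
    cappedSuffixMin s n d k = min (s k) (cappedSuffixMin s n d (k + 1)) := by
  refine le_antisymm (le_min (cappedSuffixMin_le le_rfl hk) (cappedSuffixMin_mono k.le_succ)) ?_
  refine le_cappedSuffixMin ((min_le_right _ _).trans cappedSuffixMin_le_cap) fun j hkj hjn => ?_
  rcases hkj.eq_or_lt with rfl | hlt
  · exact min_le_left _ _
  · exact (min_le_right _ _).trans (cappedSuffixMin_le hlt hjn)

/-- The witness `j` is the time just before the running minimum first drops below
`prefixMin s k`. -/
lemma exists_eq_prefixMin_of_prefixMin_lt (hs : UnitSteps n s) (hk : k ≤ n)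
    (hlt : prefixMin s n < prefixMin s k) :
    ∃ j, k ≤ j ∧ j < n ∧ s j = prefixMin s k ∧ prefixMin s j = prefixMin s k := by
  induction n, hk using Nat.le_induction with
  | base => exact absurd hlt (lt_irrefl _)
  | succ n hkn ih =>
    by_cases hn : prefixMin s n < prefixMin s k
    · obtain ⟨j, hkj, hjn, hj⟩ := ih (fun i hi => hs i (by omega)) hn
      exact ⟨j, hkj, by omega, hj⟩
    · have h₁ := prefixMin_antitone (s := s) hkn
      have h₂ := prefixMin_le (s := s) (le_refl n)
      have h₃ := prefixMin_succ (s := s) (k := n)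
      have h₄ := hs n (by omega)
      exact ⟨n, hkn, by omega, by omega, by omega⟩

lemma exists_eq_cappedSuffixMin (hs : UnitSteps n s) (h₀ : cappedSuffixMin s n d 0 = s 0)
    (hk : k ≤ n) :
    ∃ j ≤ k, s j = cappedSuffixMin s n d j ∧
      cappedSuffixMin s n d j = cappedSuffixMin s n d k := by
  induction k with
  | zero => exact ⟨0, le_rfl, h₀.symm, rfl⟩
  | succ k ih =>
    by_cases hF : cappedSuffixMin s n d k = cappedSuffixMin s n d (k + 1)
    · obtain ⟨j, hjk, hj⟩ := ih (by omega)
      exact ⟨j, by omega, hj.1, hj.2.trans hF⟩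
    · -- the capped minimum jumps at `k`: `s k` equals it there, and the up-step reaches its new value
      have h₁ := cappedSuffixMin_eq_min (s := s) (d := d) (Nat.le_of_succ_le hk)
      have h₂ := cappedSuffixMin_le (s := s) (d := d) (le_refl (k + 1)) hk
      have h₃ := hs k (by omega)
      exact ⟨k + 1, le_rfl, by omega, rfl⟩

end Heights

section Reflection

variable {s p q : ℕ → ℤ} {k : ℕ}

/-- Heights after reflecting every step that reaches a new minimum. -/
def raise (s : ℕ → ℤ) (k : ℕ) : ℤ :=
  s k - 2 * prefixMin s k

def lower (n : ℕ) (p : ℕ → ℤ) (k : ℕ) : ℤ :=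
  p k - 2 * cappedSuffixMin p n (p n / 2) k

lemma raise_zero (h₀ : s 0 = 0) : raise s 0 = 0 := by
  simp [raise, prefixMin_zero, h₀]

lemma raise_nonneg (h₀ : s 0 = 0) (k : ℕ) : 0 ≤ raise s k := by
  have h₁ := prefixMin_le (s := s) (Nat.zero_le k)
  have h₂ := prefixMin_le (s := s) (le_refl k)
  unfold raise
  omega

lemma unitSteps_raise (hs : UnitSteps n s) : UnitSteps n (raise s) := by
  intro k hk
  have h₁ := prefixMin_succ (s := s) (k := k)
  have h₂ := prefixMin_le (s := s) (le_refl k)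
  have h₃ := hs k hk
  unfold raise
  omega

lemma cappedSuffixMin_zero (h₀ : p 0 = 0) (hpos : ∀ k ≤ n, 0 ≤ p k) :
    cappedSuffixMin p n (p n / 2) 0 = 0 :=
  le_antisymm (h₀ ▸ cappedSuffixMin_le le_rfl (Nat.zero_le n))
    (le_cappedSuffixMin (by have := hpos n le_rfl; omega) fun j _ hj => hpos j hj)

lemma lower_zero (h₀ : p 0 = 0) (hpos : ∀ k ≤ n, 0 ≤ p k) : lower n p 0 = 0 := by
  simp [lower, cappedSuffixMin_zero h₀ hpos, h₀]

lemma lower_self_eq_emod_two (hpos : 0 ≤ p n) : lower n p n = p n % 2 := by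
  have h₁ := cappedSuffixMin_le_cap (s := p) (n := n) (d := p n / 2) (k := n)
  have h₂ : min (p n / 2) (p n) ≤ cappedSuffixMin p n (p n / 2) n :=
    le_cappedSuffixMin (min_le_left _ _) fun j hnj hjn => by
      rw [le_antisymm hjn hnj]; exact min_le_right _ _
  unfold lower
  omega

lemma unitSteps_lower (hp : UnitSteps n p) : UnitSteps n (lower n p) := by
  intro k hk
  have h₁ := cappedSuffixMin_eq_min (s := p) (d := p n / 2) hk.le
  have h₂ := cappedSuffixMin_le (s := p) (d := p n / 2) (le_refl (k + 1)) hk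
  have h₃ := hp k hk
  unfold lower
  omega

lemma cappedSuffixMin_eq_neg_prefixMin (hs : UnitSteps n s) (hsn : s n = 0 ∨ s n = 1)
    (hp : ∀ j ≤ n, p j = raise s j) (hk : k ≤ n) :
    cappedSuffixMin p n (p n / 2) k = -prefixMin s k := by
  have hcap : p n / 2 = -prefixMin s n := by rw [hp n le_rfl]; unfold raise; omega
  have hmin := prefixMin_antitone (s := s) hk
  apply le_antisymm
  · by_cases hlt : prefixMin s n < prefixMin s k
    · obtain ⟨j, hkj, hjn, hsj, hmj⟩ := exists_eq_prefixMin_of_prefixMin_lt hs hk hlt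
      calc cappedSuffixMin p n (p n / 2) k ≤ p j := cappedSuffixMin_le hkj hjn.le
        _ = -prefixMin s k := by rw [hp j hjn.le]; unfold raise; omega
    · exact cappedSuffixMin_le_cap.trans (by omega)
  · refine le_cappedSuffixMin (by omega) fun j hkj hjn => ?_
    have h₁ := prefixMin_antitone (s := s) hkj
    have h₂ := prefixMin_le (s := s) (le_refl j)
    rw [hp j hjn]; unfold raise; omega

lemma lower_raise (hs : UnitSteps n s) (hsn : s n = 0 ∨ s n = 1)
    (hp : ∀ j ≤ n, p j = raise s j) (hk : k ≤ n) : lower n p k = s k := by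
  rw [lower, cappedSuffixMin_eq_neg_prefixMin hs hsn hp hk, hp k hk, raise]
  ring

lemma prefixMin_eq_neg_cappedSuffixMin (hp : UnitSteps n p) (h₀ : p 0 = 0)
    (hpos : ∀ k ≤ n, 0 ≤ p k) (hq : ∀ j ≤ n, q j = lower n p j) (hk : k ≤ n) :
    prefixMin q k = -cappedSuffixMin p n (p n / 2) k := by
  apply le_antisymm
  · obtain ⟨j, hjk, hpj, hFj⟩ := exists_eq_cappedSuffixMin hp
      ((cappedSuffixMin_zero h₀ hpos).trans h₀.symm) hk
    calc prefixMin q k ≤ q j := prefixMin_le hjk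
      _ = -cappedSuffixMin p n (p n / 2) k := by rw [hq j (by omega)]; unfold lower; omega
  · refine le_prefixMin fun j hjk => ?_
    have h₁ := cappedSuffixMin_mono (s := p) (n := n) (d := p n / 2) hjk
    have h₂ := cappedSuffixMin_le (s := p) (d := p n / 2) (le_refl j) (hjk.trans hk)
    rw [hq j (by omega)]; unfold lower; omega

lemma raise_lower (hp : UnitSteps n p) (h₀ : p 0 = 0) (hpos : ∀ k ≤ n, 0 ≤ p k)
    (hq : ∀ j ≤ n, q j = lower n p j) (hk : k ≤ n) : raise q k = p k := by
  rw [raise, prefixMin_eq_neg_cappedSuffixMin hp h₀ hpos hq hk, hq k hk, lower]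
  ring

end Reflection

section Walks

variable {w v : Fin n → ℤ} {k : ℕ}

lemma psum_zero (w : Fin n → ℤ) : psum w 0 = 0 := by
  simp [psum]

lemma psum_succ (w : Fin n → ℤ) (hk : k < n) : psum w (k + 1) = psum w k + w ⟨k, hk⟩ := by
  unfold psum
  rw [show Finset.univ.filter (fun i : Fin n => (i : ℕ) < k + 1) =
      insert ⟨k, hk⟩ (Finset.univ.filter fun i : Fin n => (i : ℕ) < k) by
    ext i; simp [Fin.ext_iff]; omega]
  rw [Finset.sum_insert (by simp), add_comm]

lemma psum_of_le (w : Fin n → ℤ) (hk : n ≤ k) : psum w k = psum w n := by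
  unfold psum
  congr 1
  ext i
  simp only [Finset.mem_filter, Finset.mem_univ, true_and]
  omega

lemma ext_of_psum (h : ∀ k ≤ n, psum w k = psum v k) : w = v := by
  funext i
  have := psum_succ w i.isLt
  have := psum_succ v i.isLt
  have := h i i.isLt.le
  have := h (i + 1) i.isLt
  simp only [Fin.eta] at *
  omega

lemma unitSteps_psum (hw : ∀ i, w i = 1 ∨ w i = -1) : UnitSteps n (psum w) := by
  intro k hk
  rw [psum_succ w hk]
  rcases hw ⟨k, hk⟩ with h | h <;> rw [h] <;> omega

def ofPsum (n : ℕ) (s : ℕ → ℤ) : Fin n → ℤ :=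
  fun i => s (i + 1) - s i

lemma ofPsum_eq_one_or {s : ℕ → ℤ} (hs : UnitSteps n s) (i : Fin n) :
    ofPsum n s i = 1 ∨ ofPsum n s i = -1 := by
  have := hs i i.isLt
  unfold ofPsum
  omega

lemma psum_ofPsum (s : ℕ → ℤ) (hk : k ≤ n) : psum (ofPsum n s) k = s k - s 0 := by
  induction k with
  | zero => simp [psum_zero]
  | succ k ih => rw [psum_succ _ (by omega), ih (by omega)]; simp [ofPsum]

def reflect (w : Fin n → ℤ) : Fin n → ℤ :=
  ofPsum n (raise (psum w))

def unreflect (v : Fin n → ℤ) : Fin n → ℤ :=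
  ofPsum n (lower n (psum v))

lemma psum_reflect (w : Fin n → ℤ) (hk : k ≤ n) : psum (reflect w) k = raise (psum w) k := by
  rw [reflect, psum_ofPsum _ hk, raise_zero (psum_zero w), sub_zero]

lemma psum_reflect_nonneg (w : Fin n → ℤ) (k : ℕ) : 0 ≤ psum (reflect w) k := by
  rcases le_total k n with hk | hk
  · exact psum_reflect w hk ▸ raise_nonneg (psum_zero w) k
  · rw [psum_of_le _ hk, psum_reflect w le_rfl]
    exact raise_nonneg (psum_zero w) n

lemma psum_unreflect (hv : ∀ k, 0 ≤ psum v k) (hk : k ≤ n) :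
    psum (unreflect v) k = lower n (psum v) k := by
  rw [unreflect, psum_ofPsum _ hk, lower_zero (psum_zero v) fun k _ => hv k, sub_zero]

lemma reflect_eq_one_or (hw : ∀ i, w i = 1 ∨ w i = -1) (i : Fin n) :
    reflect w i = 1 ∨ reflect w i = -1 :=
  ofPsum_eq_one_or (unitSteps_raise (unitSteps_psum hw)) i

lemma unreflect_eq_one_or (hv : ∀ i, v i = 1 ∨ v i = -1) (i : Fin n) :
    unreflect v i = 1 ∨ unreflect v i = -1 :=
  ofPsum_eq_one_or (unitSteps_lower (unitSteps_psum hv)) i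

lemma psum_unreflect_eq_zero_or_one (hv : ∀ k, 0 ≤ psum v k) :
    psum (unreflect v) n = 0 ∨ psum (unreflect v) n = 1 := by
  have := lower_self_eq_emod_two (hv n)
  rw [psum_unreflect hv le_rfl]
  omega

lemma unreflect_reflect (hw : ∀ i, w i = 1 ∨ w i = -1) (hn : psum w n = 0 ∨ psum w n = 1) :
    unreflect (reflect w) = w :=
  ext_of_psum fun _ hk => by
    rw [psum_unreflect (psum_reflect_nonneg w) hk,
      lower_raise (unitSteps_psum hw) hn (fun _ hj => psum_reflect w hj) hk]

lemma reflect_unreflect (hv : ∀ i, v i = 1 ∨ v i = -1) (hpos : ∀ k, 0 ≤ psum v k) :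
    reflect (unreflect v) = v :=
  ext_of_psum fun _ hk => by
    rw [psum_reflect _ hk, raise_lower (unitSteps_psum hv) (psum_zero v) (fun k _ => hpos k)
      (fun _ hj => psum_unreflect hpos hj) hk]

end Walks

end WalkReflection

theorem stmt5 (n : ℕ) :
    ∃ f : {w : Fin n → ℤ // (∀ i, w i = 1 ∨ w i = -1) ∧
              (psum w n = 0 ∨ psum w n = 1)} ≃
          {w : Fin n → ℤ // (∀ i, w i = 1 ∨ w i = -1) ∧
              (∀ k, 0 ≤ psum w k)},
      ∀ w, psum (f w : Fin n → ℤ) n = psum (w : Fin n → ℤ) n - 2 * minval (w : Fin n → ℤ) := by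
  open WalkReflection in
  exact ⟨
    { toFun := fun w => ⟨reflect w.1, reflect_eq_one_or w.2.1, psum_reflect_nonneg w.1⟩
      invFun := fun v => ⟨unreflect v.1, unreflect_eq_one_or v.2.1,
        psum_unreflect_eq_zero_or_one v.2.2⟩
      left_inv := fun w => Subtype.ext (unreflect_reflect w.2.1 w.2.2)
      right_inv := fun v => Subtype.ext (reflect_unreflect v.2.1 v.2.2) },
    fun w => psum_reflect w.1 le_rfl⟩
end

section
/- For walks of length n with steps in {+1, 0, −1} starting at 0, the number of walks ending at 0 or 1 equals the number of walks whose partial sums are all nonnegative. -/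
open Finset

theorem Finset.card_filter_piFinset_eq_sum_snoc {α : Type*} {n : ℕ} (S : Finset α)
    (P : (Fin (n + 1) → α) → Prop) [DecidablePred P] :
    #{w ∈ Fintype.piFinset fun _ => S | P w}
      = ∑ s ∈ S, #{w ∈ Fintype.piFinset fun _ => S | P (Fin.snoc w s)} := by
  rw [← card_sigma]
  refine card_nbij' (fun w => ⟨w (Fin.last n), Fin.init w⟩) (fun p => Fin.snoc p.2 p.1)
    ?_ ?_ ?_ ?_
  · intro w hw
    simp only [mem_coe, mem_filter, mem_sigma, Fintype.mem_piFinset] at hw ⊢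
    exact ⟨hw.1 _, ⟨fun i => hw.1 _, by rw [Fin.snoc_init_self]; exact hw.2⟩⟩
  · rintro ⟨s, w⟩ h
    simp only [mem_coe, mem_filter, mem_sigma, Fintype.mem_piFinset] at h ⊢
    exact ⟨Fin.lastCases (by simpa using h.1) (by simpa using h.2.1), h.2.2⟩
  · intro w _; simp
  · rintro ⟨s, w⟩ _; simp

namespace TernaryWalk

variable {n : ℕ}

theorem psum_snoc (w : Fin n → ℤ) (s : ℤ) (k : ℕ) :
    psum (Fin.snoc w s : Fin (n + 1) → ℤ) k = psum w k + if n < k then s else 0 := by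
  simp [psum, sum_filter, Fin.sum_univ_castSucc]

theorem psum_of_le (w : Fin n → ℤ) {k : ℕ} (h : n ≤ k) : psum w k = psum w n := by
  simp only [psum]
  congr 1
  ext i
  simp only [mem_filter, mem_univ, true_and]
  omega

theorem psum_snoc_length (w : Fin n → ℤ) (s : ℤ) :
    psum (Fin.snoc w s : Fin (n + 1) → ℤ) (n + 1) = psum w n + s := by
  rw [psum_snoc, psum_of_le w n.le_succ, if_pos n.lt_succ_self]

theorem psum_neg (w : Fin n → ℤ) (k : ℕ) : psum (-w) k = -psum w k := by
  simp [psum]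

theorem psum_fin_zero (w : Fin 0 → ℤ) (k : ℕ) : psum w k = 0 := by
  simp [psum]

def steps : Finset ℤ := {1, 0, -1}

theorem sum_steps {M : Type*} [AddCommMonoid M] (f : ℤ → M) :
    ∑ s ∈ steps, f s = f 1 + f 0 + f (-1) := by
  simp [steps, add_assoc]

def walks (n : ℕ) : Finset (Fin n → ℤ) := Fintype.piFinset fun _ => steps

theorem mem_walks {w : Fin n → ℤ} : w ∈ walks n ↔ ∀ i, w i = 1 ∨ w i = 0 ∨ w i = -1 := by
  simp [walks, steps]

theorem neg_mem_walks {w : Fin n → ℤ} : -w ∈ walks n ↔ w ∈ walks n := by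
  simp only [mem_walks, Pi.neg_apply]
  exact forall_congr' fun i => by omega

theorem nonneg_snoc_iff (w : Fin n → ℤ) (s : ℤ) :
    (∀ k, 0 ≤ psum (Fin.snoc w s : Fin (n + 1) → ℤ) k)
      ↔ (∀ k, 0 ≤ psum w k) ∧ 0 ≤ psum w n + s := by
  simp only [psum_snoc]
  constructor
  · intro h
    refine ⟨fun k => ?_, by simpa [psum_of_le w n.le_succ] using h (n + 1)⟩
    rcases le_or_gt k n with hk | hk
    · simpa [hk.not_gt] using h k
    · simpa [psum_of_le w hk.le] using h n
  · rintro ⟨h, hs⟩ k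
    split_ifs with hk
    · rwa [psum_of_le w hk.le]
    · simpa using h k

def endCount (n : ℕ) (k : ℤ) : ℕ := #{w ∈ walks n | psum w n = k}

open Classical in
noncomputable def nonnegCountAbove (n : ℕ) (k : ℤ) : ℕ :=
  #{w ∈ walks n | (∀ j, 0 ≤ psum w j) ∧ k ≤ psum w n}

theorem endCount_succ (n : ℕ) (k : ℤ) :
    endCount (n + 1) k = ∑ s ∈ steps, endCount n (k - s) := by
  rw [endCount, walks, card_filter_piFinset_eq_sum_snoc]
  refine sum_congr rfl fun s _ => congrArg card (filter_congr fun w _ => ?_)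
  rw [psum_snoc_length, ← eq_sub_iff_add_eq]

theorem endCount_neg (n : ℕ) (k : ℤ) : endCount n (-k) = endCount n k := by
  refine card_equiv (Equiv.neg _) fun w => ?_
  simp only [mem_filter, Equiv.neg_apply, neg_mem_walks, psum_neg, neg_eq_iff_eq_neg]

open Classical in
theorem nonnegCountAbove_succ (n : ℕ) {k : ℤ} (hk : 0 ≤ k) :
    nonnegCountAbove (n + 1) k = ∑ s ∈ steps, nonnegCountAbove n (k - s) := by
  rw [nonnegCountAbove, walks, card_filter_piFinset_eq_sum_snoc]
  refine sum_congr rfl fun s _ => congrArg card (filter_congr fun w _ => ?_)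
  rw [nonneg_snoc_iff, psum_snoc_length]
  constructor
  · rintro ⟨⟨h, -⟩, hk'⟩
    exact ⟨h, by omega⟩
  · rintro ⟨h, hk'⟩
    exact ⟨⟨h, by omega⟩, by omega⟩

open Classical in
theorem card_nonneg_eq_nonnegCountAbove (n : ℕ) {k : ℤ} (hk : k ≤ 0) :
    #{w ∈ walks n | ∀ j, 0 ≤ psum w j} = nonnegCountAbove n k := by
  refine congrArg card (filter_congr fun w _ => ?_)
  exact ⟨fun h => ⟨h, hk.trans (h n)⟩, And.left⟩

theorem nonnegCountAbove_zero_length {k : ℤ} (hk : 0 ≤ k) :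
    nonnegCountAbove 0 k = endCount 0 k + endCount 0 (k + 1) := by
  rcases hk.eq_or_lt with rfl | hk
  · simp [nonnegCountAbove, endCount, psum_fin_zero, walks]
  · have hk' : (0 : ℤ) ≠ k + 1 := by omega
    simp [nonnegCountAbove, endCount, psum_fin_zero, hk.ne, hk', hk.not_ge]

theorem nonnegCountAbove_eq (n : ℕ) {k : ℤ} (hk : 0 ≤ k) :
    nonnegCountAbove n k = endCount n k + endCount n (k + 1) := by
  induction n generalizing k with
  | zero => exact nonnegCountAbove_zero_length hk
  | succ n ih =>
    rw [nonnegCountAbove_succ n hk, endCount_succ, endCount_succ]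
    simp only [sum_steps, sub_zero, sub_neg_eq_add, add_sub_cancel_right]
    rcases hk.eq_or_lt with rfl | hk
    · simp only [zero_sub, zero_add]
      rw [← card_nonneg_eq_nonnegCountAbove n (by norm_num),
        card_nonneg_eq_nonnegCountAbove n le_rfl, ih zero_le_one, ih le_rfl,
        zero_add, one_add_one_eq_two, endCount_neg n 1]
      omega
    · rw [ih (by omega), ih hk.le, ih (by omega), sub_add_cancel]
      omega

theorem coe_filter_walks (P : (Fin n → ℤ) → Prop) [DecidablePred P] :
    {w | (∀ i, w i = 1 ∨ w i = 0 ∨ w i = -1) ∧ P w} = ↑{w ∈ walks n | P w} := by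
  ext w
  simp [mem_walks]

theorem card_filter_end_zero_or_one (n : ℕ) :
    #{w ∈ walks n | psum w n = 0 ∨ psum w n = 1} = endCount n 0 + endCount n 1 := by
  rw [filter_or, card_union_of_disjoint (disjoint_filter.2 fun w _ h₀ h₁ => by omega)]
  rfl

end TernaryWalk

theorem stmt6 (n : ℕ) :
    {w : Fin n → ℤ |
        (∀ i, w i = 1 ∨ w i = 0 ∨ w i = -1) ∧
          (psum w n = 0 ∨ psum w n = 1)}.ncard
      = {w : Fin n → ℤ |
          (∀ i, w i = 1 ∨ w i = 0 ∨ w i = -1) ∧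
            (∀ k, 0 ≤ psum w k)}.ncard := by
  classical
  rw [TernaryWalk.coe_filter_walks, TernaryWalk.coe_filter_walks, Set.ncard_coe_finset,
    Set.ncard_coe_finset, TernaryWalk.card_filter_end_zero_or_one,
    TernaryWalk.card_nonneg_eq_nonnegCountAbove n le_rfl,
    TernaryWalk.nonnegCountAbove_eq n le_rfl, zero_add]
end

section
/- For walks with steps in {+1,0,−1} of length n, and each 0 ≤ d, 0 ≤ e ≤ 1, the number of walks starting at 0, ending at e, with minimum value exactly −d, equals the number of walks with all partial sums nonnegative ending at 2d+e; moreover this correspondence preserves the number of 0-steps. -/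
/-- The number of neutral (0) steps of a walk. -/
def zeros {n : ℕ} (w : Fin n → ℤ) : ℕ :=
  (Finset.univ.filter (fun i : Fin n => w i = 0)).card

namespace TernaryWalk

variable {n : ℕ}

def prefixRev (T : ℕ) (i : Fin n) : Fin n :=
  if h : (i : ℕ) < T ∧ T ≤ n then ⟨T - 1 - i, by omega⟩ else i

def reflect (T : ℕ) (w : Fin n → ℤ) (i : Fin n) : ℤ :=
  if (i : ℕ) < T then -w (prefixRev T i) else w i

def lastHit (w : Fin n → ℤ) (c : ℤ) : ℕ :=
  Nat.findGreatest (fun k => psum w k = c) n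

def IsTernary (w : Fin n → ℤ) : Prop :=
  ∀ i, w i = 1 ∨ w i = 0 ∨ w i = -1

def minWalks (n d e z : ℕ) : Set (Fin n → ℤ) :=
  {w | IsTernary w ∧ psum w n = e ∧ (∀ k ≤ n, -(d : ℤ) ≤ psum w k) ∧
    (∃ k ≤ n, psum w k = -(d : ℤ)) ∧ zeros w = z}

def nonnegWalks (n d e z : ℕ) : Set (Fin n → ℤ) :=
  {w | IsTernary w ∧ (∀ k, 0 ≤ psum w k) ∧ psum w n = 2 * (d : ℤ) + e ∧ zeros w = z}

section Reflection

variable {T : ℕ} {w : Fin n → ℤ}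

lemma prefixRev_of_lt (hT : T ≤ n) {i : Fin n} (hi : (i : ℕ) < T) :
    (prefixRev T i : ℕ) = T - 1 - i := by
  simp [prefixRev, hi, hT]

lemma prefixRev_of_ge {i : Fin n} (hi : T ≤ (i : ℕ)) : prefixRev T i = i := by
  simp [prefixRev, show ¬(i : ℕ) < T by omega]

lemma prefixRev_involutive (hT : T ≤ n) : Function.Involutive (prefixRev (n := n) T) := by
  intro i
  by_cases hi : (i : ℕ) < T
  · have h : (prefixRev T i : ℕ) < T := by rw [prefixRev_of_lt hT hi]; omega
    ext
    rw [prefixRev_of_lt hT h, prefixRev_of_lt hT hi]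
    omega
  · rw [prefixRev_of_ge (not_lt.1 hi), prefixRev_of_ge (not_lt.1 hi)]

lemma reflect_of_lt {i : Fin n} (hi : (i : ℕ) < T) : reflect T w i = -w (prefixRev T i) :=
  if_pos hi

lemma reflect_of_ge {i : Fin n} (hi : T ≤ (i : ℕ)) : reflect T w i = w i :=
  if_neg (by omega)

lemma reflect_eq_zero_iff (i : Fin n) : reflect T w i = 0 ↔ w (prefixRev T i) = 0 := by
  by_cases hi : (i : ℕ) < T
  · rw [reflect_of_lt hi, neg_eq_zero]
  · rw [reflect_of_ge (not_lt.1 hi), prefixRev_of_ge (not_lt.1 hi)]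

lemma reflect_reflect (hT : T ≤ n) : reflect T (reflect T w) = w := by
  funext i
  by_cases hi : (i : ℕ) < T
  · have h : (prefixRev T i : ℕ) < T := by rw [prefixRev_of_lt hT hi]; omega
    rw [reflect_of_lt hi, reflect_of_lt h, prefixRev_involutive hT, neg_neg]
  · rw [reflect_of_ge (not_lt.1 hi), reflect_of_ge (not_lt.1 hi)]

lemma IsTernary.reflect (hw : IsTernary w) : IsTernary (reflect T w) := by
  intro i
  by_cases hi : (i : ℕ) < T
  · rw [reflect_of_lt hi]
    rcases hw (prefixRev T i) with h | h | h <;> simp [h]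
  · rw [reflect_of_ge (not_lt.1 hi)]
    exact hw i

lemma zeros_reflect (hT : T ≤ n) : zeros (reflect T w) = zeros w :=
  Finset.card_equiv (prefixRev_involutive hT).toPerm fun i => by
    simp [reflect_eq_zero_iff]

end Reflection

section PartialSums

variable {w : Fin n → ℤ}

lemma psum_zero : psum w 0 = 0 := by simp [psum]

lemma psum_succ {k : ℕ} (hk : k < n) : psum w (k + 1) = psum w k + w ⟨k, hk⟩ := by
  have h : Finset.univ.filter (fun i : Fin n => (i : ℕ) < k + 1)
      = insert ⟨k, hk⟩ (Finset.univ.filter fun i : Fin n => (i : ℕ) < k) := by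
    ext i
    simp only [Finset.mem_filter, Finset.mem_univ, true_and, Finset.mem_insert, Fin.ext_iff]
    omega
  rw [psum, h, Finset.sum_insert (by simp), add_comm]
  rfl

lemma psum_eq_psum_min (k : ℕ) : psum w k = psum w (min k n) := by
  unfold psum
  congr 1
  ext i
  simp only [Finset.mem_filter, Finset.mem_univ, true_and]
  omega

lemma psum_succ_le_add_one (hw : ∀ i, w i ≤ 1) (k : ℕ) : psum w (k + 1) ≤ psum w k + 1 := by
  rcases lt_or_ge k n with hk | hk
  · rw [psum_succ hk]
    linarith [hw ⟨k, hk⟩]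
  · rw [psum_eq_psum_min (k + 1), psum_eq_psum_min k, min_eq_right hk, min_eq_right (by omega)]
    linarith

variable {T : ℕ}

lemma psum_reflect_of_le (hT : T ≤ n) {k : ℕ} (hk : k ≤ T) :
    psum (reflect T w) k = psum w (T - k) - psum w T := by
  induction k with
  | zero => simp [psum_zero]
  | succ k ih =>
    have hkn : k < n := by omega
    have hrev : prefixRev T (⟨k, hkn⟩ : Fin n) = ⟨T - (k + 1), by omega⟩ := by
      ext
      rw [prefixRev_of_lt hT (by simp; omega)]
      simp only
      omega
    have hsplit : T - k = T - (k + 1) + 1 := by omega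
    rw [psum_succ hkn, ih (by omega), reflect_of_lt (by simp; omega), hrev, hsplit,
      psum_succ (by omega)]
    ring

lemma psum_reflect_of_ge (hT : T ≤ n) {k : ℕ} (hTk : T ≤ k) (hk : k ≤ n) :
    psum (reflect T w) k = psum w k - 2 * psum w T := by
  induction k, hTk using Nat.le_induction with
  | base =>
    rw [psum_reflect_of_le hT le_rfl, Nat.sub_self, psum_zero]
    ring
  | succ k hTk ih =>
    have hkn : k < n := by omega
    rw [psum_succ hkn, psum_succ hkn, ih hkn.le, reflect_of_ge (by simpa using hTk)]
    ring

end PartialSums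

lemma exists_eq_of_succ_le_add_one {f : ℕ → ℤ} (hf : ∀ k, f (k + 1) ≤ f k + 1)
    {a b : ℕ} {c : ℤ} (hab : a ≤ b) (ha : f a ≤ c) (hb : c ≤ f b) :
    ∃ m, a ≤ m ∧ m ≤ b ∧ f m = c := by
  induction b, hab using Nat.le_induction with
  | base => exact ⟨a, le_rfl, le_rfl, le_antisymm ha hb⟩
  | succ b hab ih =>
    by_cases hcb : c ≤ f b
    · obtain ⟨m, ham, hmb, hm⟩ := ih hcb
      exact ⟨m, ham, hmb.trans b.le_succ, hm⟩
    · exact ⟨b + 1, by omega, le_rfl, le_antisymm (by linarith [hf b]) hb⟩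

section LastHit

variable {w : Fin n → ℤ} {c : ℤ}

lemma lastHit_le : lastHit w c ≤ n := Nat.findGreatest_le n

lemma psum_lastHit (hc : ∃ k ≤ n, psum w k = c) : psum w (lastHit w c) = c := by
  obtain ⟨k, hkn, hk⟩ := hc
  exact Nat.findGreatest_spec (P := fun k => psum w k = c) hkn hk

lemma le_psum_of_lastHit_le (hw : ∀ i, w i ≤ 1) (hc : c ≤ psum w n) {k : ℕ}
    (hk : lastHit w c ≤ k) (hkn : k ≤ n) : c ≤ psum w k := by
  by_contra! hlt
  obtain ⟨m, hkm, hmn, hm⟩ :=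
    exists_eq_of_succ_le_add_one (psum_succ_le_add_one hw) hkn hlt.le hc
  have hmT : m ≤ lastHit w c := Nat.le_findGreatest (P := fun k => psum w k = c) hmn hm
  rw [show k = m by omega] at hlt
  exact hlt.ne hm

lemma lastHit_reflect (hc : ∃ k ≤ n, psum w k = c) :
    lastHit (reflect (lastHit w c) w) (-c) = lastHit w c := by
  set T := lastHit w c
  have hT : T ≤ n := lastHit_le
  have hwT : psum w T = c := psum_lastHit hc
  refine Nat.findGreatest_eq_iff.2 ⟨hT, fun _ => ?_, fun k hTk hkn => ?_⟩
  · rw [psum_reflect_of_ge hT le_rfl hT, hwT]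
    ring
  · have hne : psum w k ≠ c := Nat.findGreatest_is_greatest (P := fun k => psum w k = c) hTk hkn
    rw [psum_reflect_of_ge hT hTk.le hkn, hwT]
    omega

lemma reflect_lastHit_reflect (hc : ∃ k ≤ n, psum w k = c) :
    reflect (lastHit (reflect (lastHit w c) w) (-c)) (reflect (lastHit w c) w) = w := by
  rw [lastHit_reflect hc, reflect_reflect lastHit_le]

end LastHit

section Bijection

variable {d e z : ℕ} {w : Fin n → ℤ}

lemma IsTernary.le_one (hw : IsTernary w) (i : Fin n) : w i ≤ 1 := by
  rcases hw i with h | h | h <;> omega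

lemma reflect_mem_nonnegWalks (hw : w ∈ minWalks n d e z) :
    reflect (lastHit w (-d)) w ∈ nonnegWalks n d e z := by
  obtain ⟨hstep, hend, hmin, hhit, hzeros⟩ := hw
  have hT : lastHit w (-d) ≤ n := lastHit_le
  have hwT : psum w (lastHit w (-d)) = -d := psum_lastHit hhit
  refine ⟨hstep.reflect, fun k => ?_, ?_, by rw [zeros_reflect hT, hzeros]⟩
  · rw [psum_eq_psum_min]
    rcases le_total (min k n) (lastHit w (-d)) with hk | hk
    · rw [psum_reflect_of_le hT hk, hwT]
      linarith [hmin _ ((Nat.sub_le _ (min k n)).trans hT)]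
    · rw [psum_reflect_of_ge hT hk (min_le_right k n), hwT]
      linarith [hmin _ (min_le_right k n)]
  · rw [psum_reflect_of_ge hT hT le_rfl, hend, hwT]
    ring

lemma exists_psum_eq_of_mem_nonnegWalks (hw : w ∈ nonnegWalks n d e z) :
    ∃ k ≤ n, psum w k = d := by
  obtain ⟨hstep, -, hend, -⟩ := hw
  obtain ⟨m, -, hmn, hm⟩ := exists_eq_of_succ_le_add_one (c := d)
    (psum_succ_le_add_one hstep.le_one) (Nat.zero_le n) (by rw [psum_zero]; positivity)
    (by rw [hend]; omega)
  exact ⟨m, hmn, hm⟩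

lemma reflect_mem_minWalks (hw : w ∈ nonnegWalks n d e z) :
    reflect (lastHit w d) w ∈ minWalks n d e z := by
  have hwT : psum w (lastHit w d) = d := psum_lastHit (exists_psum_eq_of_mem_nonnegWalks hw)
  obtain ⟨hstep, hnonneg, hend, hzeros⟩ := hw
  have hT : lastHit w d ≤ n := lastHit_le
  refine ⟨hstep.reflect, ?_, fun k hk => ?_, ⟨_, hT, ?_⟩, by rw [zeros_reflect hT, hzeros]⟩
  · rw [psum_reflect_of_ge hT hT le_rfl, hend, hwT]
    ring
  · rcases le_total k (lastHit w d) with hkT | hTk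
    · rw [psum_reflect_of_le hT hkT, hwT]
      linarith [hnonneg (lastHit w d - k)]
    · rw [psum_reflect_of_ge hT hTk hk, hwT]
      linarith [le_psum_of_lastHit_le hstep.le_one (by rw [hend]; omega) hTk hk]
  · rw [psum_reflect_of_le hT le_rfl, Nat.sub_self, psum_zero, hwT]
    ring

end Bijection

end TernaryWalk

open TernaryWalk in
theorem stmt7_general (n d e z : ℕ) :
    {w : Fin n → ℤ |
        (∀ i, w i = 1 ∨ w i = 0 ∨ w i = -1) ∧
          psum w n = e ∧
          (∀ k ≤ n, -(d : ℤ) ≤ psum w k) ∧ (∃ k ≤ n, psum w k = -(d : ℤ)) ∧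
          zeros w = z}.ncard
      = {w : Fin n → ℤ |
          (∀ i, w i = 1 ∨ w i = 0 ∨ w i = -1) ∧
            (∀ k, 0 ≤ psum w k) ∧
            psum w n = 2 * (d : ℤ) + e ∧
            zeros w = z}.ncard := by
  refine Set.BijOn.ncard_eq (f := fun w => reflect (lastHit w (-d)) w)
    (s := minWalks n d e z) (t := nonnegWalks n d e z) ?_
  refine Set.InvOn.bijOn (f' := fun w => reflect (lastHit w d) w)
    ⟨fun w hw => ?_, fun w hw => ?_⟩ (fun _ => reflect_mem_nonnegWalks)
    (fun _ => reflect_mem_minWalks)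
  · have h := reflect_lastHit_reflect hw.2.2.2.1
    rwa [neg_neg] at h
  · exact reflect_lastHit_reflect (exists_psum_eq_of_mem_nonnegWalks hw)

theorem stmt7 (n d e z : ℕ) (he : e ≤ 1) :
    {w : Fin n → ℤ |
        (∀ i, w i = 1 ∨ w i = 0 ∨ w i = -1) ∧
          psum w n = e ∧
          (∀ k ≤ n, -(d : ℤ) ≤ psum w k) ∧ (∃ k ≤ n, psum w k = -(d : ℤ)) ∧
          zeros w = z}.ncard
      = {w : Fin n → ℤ |
          (∀ i, w i = 1 ∨ w i = 0 ∨ w i = -1) ∧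
            (∀ k, 0 ≤ psum w k) ∧
            psum w n = 2 * (d : ℤ) + e ∧
            zeros w = z}.ncard :=
  stmt7_general n d e z
end

section
/- Let S ⊆ {−1,0,1}^n be stable under each map negating one coordinate. Then the number of walks of length m on ℤ^n starting at the origin with steps in S that end at a point of {0,1}^n equals the number of such walks that remain in the nonnegative orthant at all times. -/
/-!
Negating coordinates of steps keeps them in `S`, so it suffices to have, for walks in `ℤ` with
steps in `{-1, 0, 1}`, a bijection between walks ending at `0` or `1` and nonnegative walks that
only changes signs of steps, and to apply it to each coordinate separately.

Negating every step at which the walk reaches a new minimum turns the position `x k` into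
`x k - 2 min_{l ≤ k} x l ≥ 0`. The inverse negates, in a nonnegative walk ending at height `h`, the
last up-step out of each level `0, …, ⌊h/2⌋ - 1`. Both maps negate the steps at which a staircase
`t` with `t 0 = 0` moves by the step itself, which shifts the position at time `k` by `-2 t k`;
each inverse relation is then a comparison of the two staircases.
-/

/-- Partial sum (position after `k` steps) of a walk of length `m` in `ℤ^n`. -/
def psumv {n m : ℕ} (w : Fin m → (Fin n → ℤ)) (k : ℕ) : Fin n → ℤ :=
  ∑ j ∈ Finset.univ.filter (fun j : Fin m => (j : ℕ) < k), w j

open Finset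

namespace LatticeWalk

variable {m : ℕ}

section PartialSum

variable {M : Type*} [AddCommMonoid M]

def partialSum (c : Fin m → M) (k : ℕ) : M :=
  ∑ j ∈ univ.filter (fun j : Fin m => (j : ℕ) < k), c j

lemma partialSum_zero (c : Fin m → M) : partialSum c 0 = 0 := by
  simp [partialSum]

lemma partialSum_succ (c : Fin m → M) {k : ℕ} (hk : k < m) :
    partialSum c (k + 1) = partialSum c k + c ⟨k, hk⟩ := by
  have : univ.filter (fun j : Fin m => (j : ℕ) < k + 1)
      = insert ⟨k, hk⟩ (univ.filter fun j : Fin m => (j : ℕ) < k) := by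
    ext j
    simp only [mem_filter, mem_univ, true_and, mem_insert, Fin.ext_iff]
    omega
  rw [partialSum, this, sum_insert (by simp), add_comm, partialSum]

lemma partialSum_of_le (c : Fin m → M) {k : ℕ} (hk : m ≤ k) :
    partialSum c k = partialSum c m := by
  rw [partialSum, partialSum, filter_true_of_mem fun j _ => j.isLt.trans_le hk,
    filter_true_of_mem fun j _ => j.isLt]

lemma partialSum_apply {ι : Type*} (w : Fin m → ι → M) (k : ℕ) (i : ι) :
    partialSum w k i = partialSum (fun j => w j i) k := by
  simp [partialSum]

end PartialSum

lemma eq_of_partialSum_eq {M : Type*} [AddCancelCommMonoid M] {c c' : Fin m → M}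
    (h : ∀ k ≤ m, partialSum c k = partialSum c' k) : c = c' := by
  funext j
  have := h (j + 1) j.isLt
  rw [partialSum_succ c j.isLt, partialSum_succ c' j.isLt, h j j.isLt.le] at this
  exact add_left_cancel this

def runningMin (c : Fin m → ℤ) : ℕ → ℤ
  | 0 => 0
  | k + 1 => min (runningMin c k) (partialSum c (k + 1))

def futureMin (c : Fin m → ℤ) (k : ℕ) : ℤ :=
  (Icc (min k m) m).inf' (nonempty_Icc.2 (min_le_right k m)) (partialSum c)

lemma runningMin_succ (c : Fin m → ℤ) (k : ℕ) :
    runningMin c (k + 1) = min (runningMin c k) (partialSum c (k + 1)) := rfl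

lemma runningMin_le_partialSum (c : Fin m → ℤ) : ∀ k, runningMin c k ≤ partialSum c k
  | 0 => (partialSum_zero c).ge
  | _ + 1 => min_le_right _ _

lemma runningMin_nonpos (c : Fin m → ℤ) : ∀ k, runningMin c k ≤ 0
  | 0 => le_rfl
  | k + 1 => (min_le_left _ _).trans (runningMin_nonpos c k)

lemma futureMin_le_partialSum (c : Fin m → ℤ) {k l : ℕ} (hkl : k ≤ l) (hlm : l ≤ m) :
    futureMin c k ≤ partialSum c l :=
  inf'_le _ (mem_Icc.2 ⟨(min_le_left k m).trans hkl, hlm⟩)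

lemma le_futureMin (c : Fin m → ℤ) {k : ℕ} (hk : k ≤ m) {v : ℤ}
    (h : ∀ l, k ≤ l → l ≤ m → v ≤ partialSum c l) : v ≤ futureMin c k :=
  le_inf' _ _ fun l hl => h l ((min_eq_left hk).symm.trans_le (mem_Icc.1 hl).1) (mem_Icc.1 hl).2

lemma futureMin_self (c : Fin m → ℤ) : futureMin c m = partialSum c m :=
  le_antisymm (futureMin_le_partialSum c le_rfl le_rfl)
    (le_futureMin c le_rfl fun l hl hlm => by rw [le_antisymm hlm hl])

lemma futureMin_eq_min (c : Fin m → ℤ) {k : ℕ} (hk : k < m) :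
    futureMin c k = min (partialSum c k) (futureMin c (k + 1)) := by
  refine le_antisymm (le_min (futureMin_le_partialSum c le_rfl hk.le)
    (le_futureMin c hk fun l hl hlm => futureMin_le_partialSum c (by omega) hlm))
    (le_futureMin c hk.le fun l hl hlm => ?_)
  rcases hl.eq_or_lt with rfl | hl
  · exact min_le_left _ _
  · exact (min_le_right _ _).trans (futureMin_le_partialSum c hl hlm)

def negateWhereChanges (t : ℕ → ℤ) (c : Fin m → ℤ) (j : Fin m) : ℤ :=
  if t j = t (j + 1) then c j else -c j

lemma negateWhereChanges_eq_or_eq_neg (t : ℕ → ℤ) (c : Fin m → ℤ) (j : Fin m) :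
    negateWhereChanges t c j = c j ∨ negateWhereChanges t c j = -c j := by
  unfold negateWhereChanges
  split_ifs <;> simp

lemma abs_negateWhereChanges (t : ℕ → ℤ) (c : Fin m → ℤ) (j : Fin m) :
    |negateWhereChanges t c j| = |c j| := by
  rcases negateWhereChanges_eq_or_eq_neg t c j with h | h <;> simp [h]

lemma partialSum_negateWhereChanges {t : ℕ → ℤ} {c : Fin m → ℤ} (h0 : t 0 = 0)
    (ht : ∀ j : Fin m, t (j + 1) = t j ∨ t (j + 1) = t j + c j) {k : ℕ} (hk : k ≤ m) :
    partialSum (negateWhereChanges t c) k = partialSum c k - 2 * t k := by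
  induction k with
  | zero => simp [partialSum_zero, h0]
  | succ k ih =>
    rw [partialSum_succ _ hk, partialSum_succ _ hk, ih (by omega), negateWhereChanges]
    have := ht ⟨k, hk⟩
    simp only at this ⊢
    split_ifs <;> omega

def flipNewMinima (c : Fin m → ℤ) : Fin m → ℤ :=
  negateWhereChanges (runningMin c) c

/-- For a nonnegative walk ending at height `h`, the number of levels `0, …, ⌊h/2⌋ - 1` that the
walk has left for the last time before time `k`. -/
def lastExitCount (c : Fin m → ℤ) (k : ℕ) : ℤ :=
  min (partialSum c m / 2) (futureMin c k)

def flipLastExits (c : Fin m → ℤ) : Fin m → ℤ :=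
  negateWhereChanges (lastExitCount c) c

lemma lastExitCount_zero {c : Fin m → ℤ} (hnn : ∀ k, 0 ≤ partialSum c k) :
    lastExitCount c 0 = 0 := by
  have := futureMin_le_partialSum c le_rfl (Nat.zero_le m)
  have := le_futureMin c (Nat.zero_le m) fun l _ _ => hnn l
  have := hnn m
  rw [partialSum_zero] at *
  unfold lastExitCount
  omega

section UnitSteps

variable {c : Fin m → ℤ} (hc : ∀ j, |c j| ≤ 1)
include hc

lemma runningMin_succ_eq (j : Fin m) :
    runningMin c (j + 1) = runningMin c j ∨
      (c j = -1 ∧ partialSum c j = runningMin c j ∧ runningMin c (j + 1) = runningMin c j - 1) := by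
  have := abs_le.1 (hc j)
  have := partialSum_succ c j.isLt
  rw [Fin.eta] at this
  have := runningMin_le_partialSum c j
  rw [runningMin_succ]
  omega

lemma lastExitCount_succ_eq (j : Fin m) :
    lastExitCount c (j + 1) = lastExitCount c j ∨
      (c j = 1 ∧ partialSum c j = lastExitCount c j ∧
        lastExitCount c (j + 1) = lastExitCount c j + 1) := by
  have := abs_le.1 (hc j)
  have := partialSum_succ c j.isLt
  rw [Fin.eta] at this
  have := futureMin_le_partialSum c (l := j + 1) le_rfl j.isLt
  have := futureMin_eq_min c j.isLt
  unfold lastExitCount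
  omega

lemma partialSum_flipNewMinima {k : ℕ} (hk : k ≤ m) :
    partialSum (flipNewMinima c) k = partialSum c k - 2 * runningMin c k :=
  partialSum_negateWhereChanges (t := runningMin c) rfl
    (fun j => by have := runningMin_succ_eq hc j; omega) hk

lemma partialSum_flipNewMinima_nonneg (k : ℕ) : 0 ≤ partialSum (flipNewMinima c) k := by
  wlog hk : k ≤ m generalizing k
  · rw [partialSum_of_le _ (not_le.1 hk).le]
    exact this m le_rfl
  have := runningMin_le_partialSum c k
  have := runningMin_nonpos c k
  rw [partialSum_flipNewMinima hc hk]
  omega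

section Nonneg

variable (hnn : ∀ k, 0 ≤ partialSum c k)
include hnn

lemma partialSum_flipLastExits {k : ℕ} (hk : k ≤ m) :
    partialSum (flipLastExits c) k = partialSum c k - 2 * lastExitCount c k :=
  partialSum_negateWhereChanges (lastExitCount_zero hnn)
    (fun j => by have := lastExitCount_succ_eq hc j; omega) hk

lemma flipLastExits_end :
    partialSum (flipLastExits c) m = 0 ∨ partialSum (flipLastExits c) m = 1 := by
  have := hnn m
  rw [partialSum_flipLastExits hc hnn le_rfl, lastExitCount, futureMin_self]
  omega

lemma runningMin_flipLastExits {k : ℕ} (hk : k ≤ m) :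
    runningMin (flipLastExits c) k = -lastExitCount c k := by
  induction k with
  | zero => simp [runningMin, lastExitCount_zero hnn]
  | succ k ih =>
    have hstep := lastExitCount_succ_eq hc ⟨k, hk⟩
    simp only at hstep
    have := partialSum_succ c hk
    have : lastExitCount c (k + 1) ≤ partialSum c (k + 1) :=
      (min_le_right _ _).trans (futureMin_le_partialSum c le_rfl hk)
    rw [runningMin_succ, ih (by omega), partialSum_flipLastExits hc hnn hk]
    omega

theorem flipNewMinima_flipLastExits : flipNewMinima (flipLastExits c) = c := by
  have hd j : |flipLastExits c j| ≤ 1 := (abs_negateWhereChanges _ _ j).trans_le (hc j)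
  refine eq_of_partialSum_eq fun k hk => ?_
  rw [partialSum_flipNewMinima hd hk, runningMin_flipLastExits hc hnn hk,
    partialSum_flipLastExits hc hnn hk]
  ring

end Nonneg

section EndsLow

variable (hend : partialSum c m = 0 ∨ partialSum c m = 1)
include hend

lemma lastExitCount_flipNewMinima {k : ℕ} (hk : k ≤ m) :
    lastExitCount (flipNewMinima c) k = -runningMin c k := by
  have hhalf : partialSum (flipNewMinima c) m / 2 = -runningMin c m := by
    rw [partialSum_flipNewMinima hc le_rfl]
    omega
  rw [lastExitCount, hhalf]
  refine Nat.decreasingInduction (motive := fun k _ =>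
    min (-runningMin c m) (futureMin (flipNewMinima c) k) = -runningMin c k)
    (fun k hk ih => ?_) ?_ hk
  · have hstep := runningMin_succ_eq hc ⟨k, hk⟩
    simp only at hstep
    have := runningMin_le_partialSum c k
    rw [futureMin_eq_min _ hk, partialSum_flipNewMinima hc hk.le]
    omega
  · have := runningMin_le_partialSum c m
    rw [futureMin_self, partialSum_flipNewMinima hc le_rfl]
    omega

theorem flipLastExits_flipNewMinima : flipLastExits (flipNewMinima c) = c := by
  have hd j : |flipNewMinima c j| ≤ 1 := (abs_negateWhereChanges _ _ j).trans_le (hc j)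
  refine eq_of_partialSum_eq fun k hk => ?_
  rw [partialSum_flipLastExits hd (partialSum_flipNewMinima_nonneg hc) hk,
    lastExitCount_flipNewMinima hc hend hk, partialSum_flipNewMinima hc hk]
  ring

end EndsLow

end UnitSteps

lemma mem_of_forall_eq_or_eq_neg {ι G : Type*} [Fintype ι] [DecidableEq ι] [InvolutiveNeg G]
    {S : Set (ι → G)} (hS : ∀ s ∈ S, ∀ j, (fun i => if i = j then -s i else s i) ∈ S)
    {s s' : ι → G} (hs : s ∈ S) (hs' : ∀ i, s' i = s i ∨ s' i = -s i) : s' ∈ S := by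
  classical
  have hflip (t : Finset ι) : (fun i => if i ∈ t then -s i else s i) ∈ S := by
    induction t using Finset.induction_on with
    | empty => simpa using hs
    | insert a t ha ih =>
      convert hS _ ih a using 2 with i
      by_cases hia : i = a
      · simp [hia, ha]
      · simp [hia]
  convert hflip (univ.filter fun i => s' i ≠ s i) using 2 with i
  by_cases hi : s' i = s i
  · simp [hi]
  · simpa [hi] using (hs' i).resolve_left hi

def mapColumns {n : ℕ} (f : (Fin m → ℤ) → Fin m → ℤ) (w : Fin m → Fin n → ℤ) :
    Fin m → Fin n → ℤ :=
  fun j i => f (fun j' => w j' i) j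

theorem ncard_setOf_columns_eq {n : ℕ} {S : Set (Fin n → ℤ)} (hS1 : ∀ s ∈ S, ∀ i, |s i| ≤ 1)
    (hS2 : ∀ s ∈ S, ∀ s' : Fin n → ℤ, (∀ i, s' i = s i ∨ s' i = -s i) → s' ∈ S)
    {p q : (Fin m → ℤ) → Prop} {f g : (Fin m → ℤ) → Fin m → ℤ}
    (hf : ∀ c j, f c j = c j ∨ f c j = -c j) (hg : ∀ c j, g c j = c j ∨ g c j = -c j)
    (hfg : ∀ c, (∀ j, |c j| ≤ 1) → p c → q (f c) ∧ g (f c) = c)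
    (hgf : ∀ c, (∀ j, |c j| ≤ 1) → q c → p (g c) ∧ f (g c) = c) :
    {w : Fin m → Fin n → ℤ | (∀ j, w j ∈ S) ∧ ∀ i, p fun j => w j i}.ncard =
      {w : Fin m → Fin n → ℤ | (∀ j, w j ∈ S) ∧ ∀ i, q fun j => w j i}.ncard := by
  have hsteps {φ : (Fin m → ℤ) → Fin m → ℤ} (hφ : ∀ c j, φ c j = c j ∨ φ c j = -c j)
      {w : Fin m → Fin n → ℤ} (hw : ∀ j, w j ∈ S) (j : Fin m) : mapColumns φ w j ∈ S :=
    hS2 _ (hw j) _ fun i => hφ _ j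
  have hbdd {w : Fin m → Fin n → ℤ} (hw : ∀ j, w j ∈ S) (i : Fin n) (j : Fin m) : |w j i| ≤ 1 :=
    hS1 _ (hw j) i
  refine Set.BijOn.ncard_eq (f := mapColumns f)
    (Set.InvOn.bijOn (f' := mapColumns g) ⟨?_, ?_⟩ ?_ ?_)
  · rintro w ⟨hw, hp⟩
    funext j i
    exact congrFun (hfg _ (hbdd hw i) (hp i)).2 j
  · rintro w ⟨hw, hq⟩
    funext j i
    exact congrFun (hgf _ (hbdd hw i) (hq i)).2 j
  · rintro w ⟨hw, hp⟩
    exact ⟨hsteps hf hw, fun i => (hfg _ (hbdd hw i) (hp i)).1⟩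
  · rintro w ⟨hw, hq⟩
    exact ⟨hsteps hg hw, fun i => (hgf _ (hbdd hw i) (hq i)).1⟩

end LatticeWalk

open LatticeWalk

lemma psumv_apply {n m : ℕ} (w : Fin m → Fin n → ℤ) (k : ℕ) (i : Fin n) :
    psumv w k i = partialSum (fun j => w j i) k :=
  partialSum_apply w k i

theorem stmt8 (n m : ℕ) (S : Set (Fin n → ℤ))
    (hS1 : ∀ s ∈ S, ∀ i, s i = -1 ∨ s i = 0 ∨ s i = 1)
    (hS2 : ∀ s ∈ S, ∀ j : Fin n,
      (fun i => if i = j then -s i else s i) ∈ S) :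
    {w : Fin m → (Fin n → ℤ) |
        (∀ j, w j ∈ S) ∧
          (∀ i, psumv w m i = 0 ∨ psumv w m i = 1)}.ncard
      = {w : Fin m → (Fin n → ℤ) |
          (∀ j, w j ∈ S) ∧
            (∀ k, ∀ i, 0 ≤ psumv w k i)}.ncard := by
  have hbdd : ∀ s ∈ S, ∀ i, |s i| ≤ 1 := fun s hs i => by
    rcases hS1 s hs i with h | h | h <;> simp [h]
  simp only [psumv_apply, forall_comm (α := ℕ)]
  exact ncard_setOf_columns_eq (f := flipNewMinima) (g := flipLastExits) hbdd
    (fun s hs s' => mem_of_forall_eq_or_eq_neg hS2 hs)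
    (fun c => negateWhereChanges_eq_or_eq_neg _ c) (fun c => negateWhereChanges_eq_or_eq_neg _ c)
    (fun c hc hend => ⟨partialSum_flipNewMinima_nonneg hc, flipLastExits_flipNewMinima hc hend⟩)
    (fun c hc hnn => ⟨flipLastExits_end hc hnn, flipNewMinima_flipLastExits hc hnn⟩)
end

section
/- For all n ∈ ℕ, the convolution identity ∑_{i+j=n} C(2i,i) · C(2j,j) = 4^n holds. -/
/-!
Write `S n = ∑_{i+j=n} C(2i,i) C(2j,j)`. Weighting the terms of `S (n+1)` by `2i` and using
`(i+1) C(2i+2,i+1) = 2 (2i+1) C(2i,i)` gives `(n+1) S (n+1) = 4 (n+1) S n`, because by the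
symmetry `i ↔ j` the weight `2i` averages to `i + j = n`. Hence `S n = 4 ^ n`.
-/

open Finset Nat

theorem Finset.Nat.sum_antidiagonal_two_mul_fst_mul {R : Type*} [CommSemiring R] (f : ℕ → R)
    (n : ℕ) :
    ∑ p ∈ antidiagonal n, 2 * (p.1 : R) * (f p.1 * f p.2) =
      n * ∑ p ∈ antidiagonal n, f p.1 * f p.2 := by
  have hswap : ∑ p ∈ antidiagonal n, (p.1 : R) * (f p.1 * f p.2) =
      ∑ p ∈ antidiagonal n, (p.2 : R) * (f p.1 * f p.2) := by
    rw [← Finset.Nat.sum_antidiagonal_swap]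
    exact sum_congr rfl fun p _ => by simp only [Prod.fst_swap, Prod.snd_swap]; ring
  calc ∑ p ∈ antidiagonal n, 2 * (p.1 : R) * (f p.1 * f p.2)
      = ∑ p ∈ antidiagonal n, ((p.1 + p.2 : ℕ) : R) * (f p.1 * f p.2) := by
        simp only [cast_add, add_mul, sum_add_distrib, ← hswap, two_mul]
    _ = n * ∑ p ∈ antidiagonal n, f p.1 * f p.2 := by
        rw [mul_sum]
        exact sum_congr rfl fun p hp => by rw [mem_antidiagonal.1 hp]

theorem Nat.sum_antidiagonal_centralBinom_mul_succ (n : ℕ) :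
    ∑ p ∈ antidiagonal (n + 1), centralBinom p.1 * centralBinom p.2 =
      4 * ∑ p ∈ antidiagonal n, centralBinom p.1 * centralBinom p.2 := by
  set S := fun m => ∑ p ∈ antidiagonal m, centralBinom p.1 * centralBinom p.2
  have hstep (i j : ℕ) : 2 * (i + 1) * (centralBinom (i + 1) * centralBinom j) =
      4 * (2 * i * (centralBinom i * centralBinom j)) + 4 * (centralBinom i * centralBinom j) := by
    have := succ_mul_centralBinom_succ i
    calc 2 * (i + 1) * (centralBinom (i + 1) * centralBinom j)
        = 2 * ((i + 1) * centralBinom (i + 1)) * centralBinom j := by ring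
      _ = _ := by rw [this]; ring
  have hsym (m : ℕ) : ∑ p ∈ antidiagonal m, 2 * p.1 * (centralBinom p.1 * centralBinom p.2) =
      m * S m := by
    simpa using Finset.Nat.sum_antidiagonal_two_mul_fst_mul centralBinom m
  have hweighted : (n + 1) * S (n + 1) = (n + 1) * (4 * S n) := calc
    (n + 1) * S (n + 1)
        = ∑ p ∈ antidiagonal (n + 1), 2 * p.1 * (centralBinom p.1 * centralBinom p.2) := by
          rw [hsym]
      _ = ∑ p ∈ antidiagonal n, 2 * (p.1 + 1) * (centralBinom (p.1 + 1) * centralBinom p.2) := by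
          simp [Finset.Nat.sum_antidiagonal_succ]
      _ = 4 * ∑ p ∈ antidiagonal n, 2 * p.1 * (centralBinom p.1 * centralBinom p.2) + 4 * S n := by
          simp only [hstep, sum_add_distrib, mul_sum, S]
      _ = (n + 1) * (4 * S n) := by
          rw [hsym]
          ring
  exact Nat.eq_of_mul_eq_mul_left n.succ_pos hweighted

theorem Nat.sum_antidiagonal_centralBinom_mul (n : ℕ) :
    ∑ p ∈ antidiagonal n, centralBinom p.1 * centralBinom p.2 = 4 ^ n := by
  induction n with
  | zero => rfl
  | succ n ih => rw [sum_antidiagonal_centralBinom_mul_succ, ih, pow_succ, mul_comm]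

theorem stmt9 (n : ℕ) :
    ∑ i ∈ Finset.range (n + 1),
        Nat.choose (2 * i) i * Nat.choose (2 * (n - i)) (n - i) = 4 ^ n := by
  rw [← Nat.sum_antidiagonal_centralBinom_mul n,
    Finset.Nat.sum_antidiagonal_eq_sum_range_succ (fun i j => centralBinom i * centralBinom j)]
  rfl
end

section
/- The set of ±1-walks of length 2n+1 starting at 0 and ending at a strictly positive value is in bijection with the set of pairs (u, v) where u is a ±1-walk of some even length 2i ending at 0, v is a ±1-walk of length 2(n−i) with all partial sums nonnegative, and i ranges over 0..n; the bijection is given by concatenating u, a single +1 step, and v. -/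
/-!
Cut a walk with positive endpoint at its last visit to `0`: the next step must be `+1`, and from
then on the walk stays at height `≥ 1`, so the rest is a walk with nonnegative partial sums.
Conversely, in `u ++ 1 :: v` with `u.sum = 0` and `v` nonnegative the walk never returns to `0`
after `u`, which recovers the cut point. A `±1` walk ending at `0` has even length.
-/

/-- All steps of the list are `+1` or `-1`. -/
def IsPM (w : List ℤ) : Prop := ∀ x ∈ w, x = 1 ∨ x = -1

lemma isPM_append_one_cons {u v : List ℤ} : IsPM (u ++ 1 :: v) ↔ IsPM u ∧ IsPM v := by
  simp only [IsPM, List.mem_append, List.mem_cons, or_imp, forall_and, forall_eq, true_or,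
    true_and]

lemma IsPM.even_sum_iff {w : List ℤ} (hw : IsPM w) : Even w.sum ↔ Even w.length := by
  induction w with
  | nil => simp
  | cons a w ih =>
    have ih := ih fun x hx => hw x (List.mem_cons_of_mem a hx)
    rcases hw a List.mem_cons_self with rfl | rfl <;>
      simp [Int.even_add, Nat.even_add_one, ih, parity_simps]

lemma sum_nonneg_of_forall_sum_take_nonneg {v : List ℤ} (hv : ∀ k, 0 ≤ (v.take k).sum) :
    0 ≤ v.sum := by
  simpa using hv v.length

lemma forall_sum_take_append_singleton_nonneg {v : List ℤ} {x : ℤ}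
    (hv : ∀ k, 0 ≤ (v.take k).sum) (hvx : 0 ≤ v.sum + x) :
    ∀ k, 0 ≤ ((v ++ [x]).take k).sum := by
  intro k
  rcases le_or_gt k v.length with hk | hk
  · simpa [List.take_append, Nat.sub_eq_zero_of_le hk] using hv k
  · have hx : [x].take (k - v.length) = [x] := List.take_of_length_le (by simp; omega)
    simpa [List.take_append, List.take_of_length_le hk.le, hx] using hvx

lemma sum_take_append_one_cons_ge {u v : List ℤ} (hv : ∀ k, 0 ≤ (v.take k).sum) {m : ℕ}
    (hm : u.length < m) : u.sum + 1 ≤ ((u ++ 1 :: v).take m).sum := by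
  obtain ⟨r, rfl⟩ : ∃ r, m = u.length + (r + 1) := ⟨m - u.length - 1, by omega⟩
  rw [List.take_length_add_append, List.take_succ_cons]
  simpa using hv r

lemma length_le_of_append_one_cons_eq {u₁ v₁ u₂ v₂ : List ℤ} (h : u₁ ++ 1 :: v₁ = u₂ ++ 1 :: v₂)
    (hu₁ : u₁.sum = 0) (hu₂ : u₂.sum = 0) (hv₁ : ∀ k, 0 ≤ (v₁.take k).sum) :
    u₂.length ≤ u₁.length := by
  by_contra! hlt
  have hge := sum_take_append_one_cons_ge hv₁ hlt
  rw [h, List.take_left, hu₁, hu₂] at hge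
  omega

lemma IsPM.exists_append_one_cons_of_sum_pos {w : List ℤ} (hw : IsPM w) (hpos : 0 < w.sum) :
    ∃ u v, w = u ++ 1 :: v ∧ u.sum = 0 ∧ ∀ k, 0 ≤ (v.take k).sum := by
  induction w using List.reverseRecOn with
  | nil => simp at hpos
  | append_singleton w x ih =>
    have hw' : IsPM w := fun y hy => hw y (List.mem_append_left _ hy)
    have hx := hw x (by simp)
    rw [List.sum_append, List.sum_singleton] at hpos
    rcases lt_or_ge 0 w.sum with hw_pos | hw_nonpos
    · obtain ⟨u, v, rfl, hu, hv⟩ := ih hw' hw_pos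
      refine ⟨u, v ++ [x], by simp, hu, forall_sum_take_append_singleton_nonneg hv ?_⟩
      simp only [List.sum_append, List.sum_cons, hu] at hpos
      omega
    · have hx1 : x = 1 := by omega
      exact ⟨w, [], by simp [hx1], by omega, by simp⟩

theorem stmt11 (n : ℕ) :
    Set.BijOn (fun p : List ℤ × List ℤ => p.1 ++ 1 :: p.2)
      {p : List ℤ × List ℤ |
          IsPM p.1 ∧ IsPM p.2 ∧
          (∃ i ≤ n, p.1.length = 2 * i ∧ p.2.length = 2 * (n - i)) ∧
          p.1.sum = 0 ∧
          (∀ k, 0 ≤ (p.2.take k).sum)}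
      {w : List ℤ | w.length = 2 * n + 1 ∧ IsPM w ∧ 0 < w.sum} := by
  refine ⟨?mapsTo, ?injOn, ?surjOn⟩
  case mapsTo =>
    rintro ⟨u, v⟩ ⟨hu, hv, ⟨i, hi, hul, hvl⟩, hus, hvt⟩
    dsimp only at *
    have hvs := sum_nonneg_of_forall_sum_take_nonneg hvt
    refine ⟨?_, isPM_append_one_cons.2 ⟨hu, hv⟩, ?_⟩
    · simp only [List.length_append, List.length_cons, hul, hvl]
      omega
    · simp only [List.sum_append, List.sum_cons, hus]
      omega
  case injOn =>
    rintro ⟨u₁, v₁⟩ ⟨-, -, -, hs₁, ht₁⟩ ⟨u₂, v₂⟩ ⟨-, -, -, hs₂, ht₂⟩ heq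
    dsimp only at *
    have hlen : u₁.length = u₂.length := le_antisymm
      (length_le_of_append_one_cons_eq heq.symm hs₂ hs₁ ht₂)
      (length_le_of_append_one_cons_eq heq hs₁ hs₂ ht₁)
    obtain ⟨rfl, hv⟩ := List.append_inj heq hlen
    rw [List.cons_inj_right] at hv
    rw [hv]
  case surjOn =>
    rintro w ⟨hwl, hw, hws⟩
    obtain ⟨u, v, rfl, hus, hvt⟩ := hw.exists_append_one_cons_of_sum_pos hws
    obtain ⟨hu, hv⟩ := isPM_append_one_cons.1 hw
    obtain ⟨i, hi⟩ : Even u.length := hu.even_sum_iff.1 (by simp [hus])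
    simp only [List.length_append, List.length_cons] at hwl
    have hlen : u.length = 2 * i ∧ v.length = 2 * (n - i) := by omega
    exact ⟨(u, v), ⟨hu, hv, ⟨i, by omega, hlen⟩, hus, hvt⟩, rfl⟩
end

section
/- Let R_{t,i} be the number of walks of length i on ℤ starting and ending at 0, with steps +1, −1, or one of t distinguishable neutral steps. Then for all l ≥ 0, ∑_{i+j=l} R_{t,i} · R_{t,j} = ((t+2)^{l+1} − (t−2)^{l+1})/4. -/
/-- Displacement of a step type among `t+2` types: type 0 moves `+1`,
type 1 moves `-1`, and the remaining `t` types are neutral. -/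
def disp {t : ℕ} (s : Fin (t + 2)) : ℤ :=
  if (s : ℕ) = 0 then 1 else if (s : ℕ) = 1 then -1 else 0

/-- Number of recurrent walks of length `i` with steps `+1`, `-1`
and `t` distinguishable neutral steps. -/
noncomputable def R (t i : ℕ) : ℕ :=
  {w : Fin i → Fin (t + 2) | ∑ j, disp (w j) = 0}.ncard

/-!
Choosing which steps are non-neutral shows that `R t` is the binomial transform
`(B a) i = ∑ₘ C(i, m) t^(i-m) a m` of `a = R 0`, which is `C(2n, n)` at `2n` and vanishes at odd
indices. By `∑_{i+j=l} C(i, m) C(j, n) = C(l+1, m+n+1)`, the transform turns convolutions into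
convolutions: `∑_{i+j=l} (B a) i (B b) j = ∑ₖ C(l+1, k+1) t^(l-k) (a * b) k`. This reduces the
theorem to `t = 0`: there the recurrence `(m+2) R 0 (m+2) = 4 (m+1) R 0 m`, combined with the
symmetry `i ↔ j` of the convolution, gives `(R 0 * R 0) (l+2) = 4 (R 0 * R 0) l`. The binomial
theorem then sums the transformed sequence.
-/

open Finset

section Walks

variable {S : Type*} [CommSemiring S]

theorem card_filter_sum_eq_coeff_pow {α M : Type*} [Fintype α] [AddCommMonoid M] [DecidableEq M]
    (f : α → M) (i : ℕ) (k : M) :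
    (#{w : Fin i → α | ∑ j, f (w j) = k} : S)
      = ((∑ s, AddMonoidAlgebra.single (f s) (1 : S)) ^ i).coeff k := by
  have hpow : (∑ s, AddMonoidAlgebra.single (f s) (1 : S)) ^ i
      = ∑ w : Fin i → α, AddMonoidAlgebra.single (∑ j, f (w j)) 1 := by
    rw [← Fin.prod_const, prod_univ_sum, Fintype.piFinset_univ]
    simp_rw [AddMonoidAlgebra.prod_single, prod_const_one]
  rw [hpow, AddMonoidAlgebra.coeff_sum, Finset.sum_apply', Finset.natCast_card_filter]
  simp_rw [AddMonoidAlgebra.coeff_single, Finsupp.single_apply]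

theorem sum_single_disp (t : ℕ) :
    ∑ s : Fin (t + 2), AddMonoidAlgebra.single (disp s) (1 : S)
      = AddMonoidAlgebra.single 1 1 + AddMonoidAlgebra.single (-1) 1
        + AddMonoidAlgebra.single 0 (t : S) := by
  simp [Fin.sum_univ_succ, disp, add_assoc]

theorem R_eq_coeff_pow (t i : ℕ) :
    (R t i : S) = ((AddMonoidAlgebra.single 1 1 + AddMonoidAlgebra.single (-1) 1
        + AddMonoidAlgebra.single 0 (t : S)) ^ i).coeff 0 := by
  classical
  rw [R, ← sum_single_disp, ← card_filter_sum_eq_coeff_pow, ← Set.ncard_coe_finset]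
  simp

end Walks

theorem sum_antidiagonal_choose_mul_choose (m : ℕ) : ∀ l n : ℕ,
    ∑ p ∈ antidiagonal l, p.1.choose m * p.2.choose n = (l + 1).choose (m + n + 1)
  | 0, n => by cases m <;> cases n <;> simp [Nat.choose_eq_zero_of_lt]
  | l + 1, 0 => by
    have ih := sum_antidiagonal_choose_mul_choose m l 0
    simp only [Nat.choose_zero_right, mul_one, add_zero] at ih ⊢
    rw [Nat.sum_antidiagonal_succ', ih, Nat.choose_succ_succ' (l + 1)]
  | l + 1, n + 1 => by
    rw [Nat.sum_antidiagonal_succ', Nat.choose_succ_succ' (l + 1)]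
    simp_rw [Nat.choose_zero_succ, mul_zero, zero_add, Nat.choose_succ_succ' _ n, mul_add,
      sum_add_distrib, sum_antidiagonal_choose_mul_choose m l]
    ring_nf

section BinomialTransform

variable {S : Type*} [CommSemiring S]

theorem sum_antidiagonal_choose_mul_pow_mul_choose_mul_pow (x : S) (l m n : ℕ) :
    ∑ p ∈ antidiagonal l, (p.1.choose m * x ^ (p.1 - m)) * (p.2.choose n * x ^ (p.2 - n))
      = (l + 1).choose (m + n + 1) * x ^ (l - m - n) := by
  have key : ∀ p ∈ antidiagonal l,
      (p.1.choose m * x ^ (p.1 - m)) * (p.2.choose n * x ^ (p.2 - n))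
        = ((p.1.choose m * p.2.choose n : ℕ) : S) * x ^ (l - m - n) := by
    rintro ⟨i, j⟩ hij
    rw [HasAntidiagonal.mem_antidiagonal] at hij
    obtain him | hmi := lt_or_ge i m
    · simp [Nat.choose_eq_zero_of_lt him]
    obtain hjn | hnj := lt_or_ge j n
    · simp [Nat.choose_eq_zero_of_lt hjn]
    rw [show l - m - n = (i - m) + (j - n) by omega, pow_add]
    push_cast
    ring
  rw [sum_congr rfl key, ← sum_mul, ← Nat.cast_sum, sum_antidiagonal_choose_mul_choose]

/-- The truncated `i - m` is harmless: `i.choose m = 0` for `m > i`. -/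
def binomTransform (x : S) (a : ℕ → S) (i : ℕ) : S :=
  ∑ m ∈ range (i + 1), i.choose m * x ^ (i - m) * a m

theorem binomTransform_eq_sum_range (x : S) (a : ℕ → S) {i N : ℕ} (h : i ≤ N) :
    binomTransform x a i = ∑ m ∈ range (N + 1), i.choose m * x ^ (i - m) * a m := by
  refine sum_subset (range_subset_range.2 (by omega)) fun m _ hm => ?_
  rw [Nat.choose_eq_zero_of_lt (by simpa using hm), Nat.cast_zero, zero_mul, zero_mul]

theorem sum_antidiagonal_binomTransform_mul (x : S) (a b : ℕ → S) (l : ℕ) :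
    ∑ p ∈ antidiagonal l, binomTransform x a p.1 * binomTransform x b p.2
      = ∑ k ∈ range (l + 1),
          (l + 1).choose (k + 1) * x ^ (l - k) * ∑ p ∈ antidiagonal k, a p.1 * b p.2 := by
  set F : ℕ → ℕ → S := fun m n => a m * b n * ((l + 1).choose (m + n + 1) * x ^ (l - m - n))
  have lhs : ∑ p ∈ antidiagonal l, binomTransform x a p.1 * binomTransform x b p.2
      = ∑ m ∈ range (l + 1), ∑ n ∈ range (l + 1), F m n := by
    calc _ = ∑ p ∈ antidiagonal l, ∑ m ∈ range (l + 1), ∑ n ∈ range (l + 1), a m * b n *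
            ((p.1.choose m * x ^ (p.1 - m)) * (p.2.choose n * x ^ (p.2 - n))) := by
          refine sum_congr rfl fun p hp => ?_
          rw [binomTransform_eq_sum_range x a (HasAntidiagonal.antidiagonal.fst_le hp),
            binomTransform_eq_sum_range x b (HasAntidiagonal.antidiagonal.snd_le hp), sum_mul_sum]
          exact sum_congr rfl fun m _ => sum_congr rfl fun n _ => by ring
      _ = _ := by
          rw [sum_comm]
          refine sum_congr rfl fun m _ => ?_
          rw [sum_comm]
          simp_rw [← mul_sum, sum_antidiagonal_choose_mul_pow_mul_choose_mul_pow, F]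
  have rhs : ∑ k ∈ range (l + 1),
        (l + 1).choose (k + 1) * x ^ (l - k) * ∑ p ∈ antidiagonal k, a p.1 * b p.2
      = ∑ m ∈ range (l + 1), ∑ n ∈ range (l + 1), F m n := by
    calc _ = ∑ k ∈ range (l + 1), ∑ m ∈ range (k + 1), F m (k - m) := by
          refine sum_congr rfl fun k _ => ?_
          rw [Nat.sum_antidiagonal_eq_sum_range_succ (fun i j => a i * b j), mul_sum]
          refine sum_congr rfl fun m hm => ?_
          rw [mem_range] at hm
          simp only [F, show m + (k - m) = k by omega, show l - m - (k - m) = l - k by omega]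
          ring
      _ = ∑ m ∈ range (l + 1), ∑ n ∈ range (l + 1 - m), F m n := sum_range_diag_flip _ F
      _ = _ := by
          refine sum_congr rfl fun m _ => sum_subset (range_subset_range.2 (by omega)) ?_
          intro n _ hn
          rw [mem_range] at hn
          simp [F, Nat.choose_eq_zero_of_lt (show l + 1 < m + n + 1 by omega)]
  rw [lhs, rhs]

theorem R_eq_binomTransform (t i : ℕ) :
    (R t i : S) = binomTransform (t : S) (fun m => (R 0 m : S)) i := by
  simp only [R_eq_coeff_pow, Nat.cast_zero, AddMonoidAlgebra.single_zero, add_zero, binomTransform]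
  rw [add_pow, AddMonoidAlgebra.coeff_sum, Finset.sum_apply']
  refine sum_congr rfl fun m _ => ?_
  rw [AddMonoidAlgebra.single_pow, AddMonoidAlgebra.natCast_def, mul_assoc,
    AddMonoidAlgebra.single_mul_single, nsmul_zero, add_zero,
    AddMonoidAlgebra.coeff_mul_single_zero]
  ring

end BinomialTransform

theorem R_zero_eq_sum_ite (m : ℕ) :
    R 0 m = ∑ r ∈ range (m + 1), if 2 * r = m then m.choose r else 0 := by
  rw [← Nat.cast_id (R 0 m), R_eq_coeff_pow, Nat.cast_zero, AddMonoidAlgebra.single_zero,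
    add_zero, add_pow, AddMonoidAlgebra.coeff_sum, Finset.sum_apply']
  refine sum_congr rfl fun r hr => ?_
  rw [mem_range] at hr
  simp only [AddMonoidAlgebra.single_pow, AddMonoidAlgebra.natCast_def,
    AddMonoidAlgebra.single_mul_single, AddMonoidAlgebra.coeff_single, Finsupp.single_apply]
  simp only [one_pow, mul_one, add_zero, Nat.cast_id, nsmul_eq_mul, mul_neg, one_mul]
  congr 1
  apply propext
  omega

theorem R_zero_two_mul (n : ℕ) : R 0 (2 * n) = n.centralBinom := by
  rw [R_zero_eq_sum_ite, Nat.centralBinom_eq_two_mul_choose,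
    sum_eq_single n (fun r _ hr => if_neg (by omega)) (fun h => (h (mem_range.2 (by omega))).elim),
    if_pos rfl]

theorem R_zero_two_mul_add_one (n : ℕ) : R 0 (2 * n + 1) = 0 := by
  rw [R_zero_eq_sum_ite]
  exact sum_eq_zero fun r _ => if_neg (by omega)

theorem R_zero_add_two (m : ℕ) : (m + 2) * R 0 (m + 2) = 4 * (m + 1) * R 0 m := by
  obtain ⟨n, rfl | rfl⟩ := Nat.even_or_odd' m
  · rw [show 2 * n + 2 = 2 * (n + 1) by ring, R_zero_two_mul, R_zero_two_mul]
    linear_combination 2 * Nat.succ_mul_centralBinom_succ n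
  · rw [show 2 * n + 1 + 2 = 2 * (n + 1) + 1 by ring, R_zero_two_mul_add_one,
      R_zero_two_mul_add_one, mul_zero, mul_zero]

theorem sum_antidiagonal_mul_add_two_of_recurrence {K : Type*} [Field K] [CharZero K]
    (c : ℕ → K) (κ : K) (h1 : c 1 = 0)
    (hrec : ∀ m : ℕ, (m + 2 : K) * c (m + 2) = κ * (m + 1) * c m) (l : ℕ) :
    ∑ p ∈ antidiagonal (l + 2), c p.1 * c p.2 = κ * ∑ p ∈ antidiagonal l, c p.1 * c p.2 := by
  set S := fun n : ℕ => ∑ p ∈ antidiagonal n, c p.1 * c p.2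
  set T := fun n : ℕ => ∑ p ∈ antidiagonal n, (p.1 : K) * c p.1 * c p.2
  have two_mul_T (n : ℕ) : 2 * T n = n * S n := by
    simp only [T, S, two_mul]
    nth_rewrite 2 [← Nat.sum_antidiagonal_swap]
    rw [← sum_add_distrib, mul_sum]
    refine sum_congr rfl fun p hp => ?_
    rw [HasAntidiagonal.mem_antidiagonal] at hp
    simp only [Prod.fst_swap, Prod.snd_swap, ← hp]
    push_cast
    ring
  have T_add_two : T (l + 2) = κ * T l + κ * S l := by
    simp only [T, S, Nat.sum_antidiagonal_succ, h1, mul_sum, ← sum_add_distrib]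
    push_cast
    simp only [zero_mul, mul_zero, zero_add]
    refine sum_congr rfl fun p _ => ?_
    linear_combination c p.2 * hrec p.1
  refine mul_left_cancel₀ (by norm_cast : ((l + 2 : ℕ) : K) ≠ 0) ?_
  have hl : ((l + 2 : ℕ) : K) = l + 2 := by push_cast; rfl
  linear_combination -two_mul_T (l + 2) + 2 * T_add_two + κ * two_mul_T l - κ * S l * hl

theorem sum_antidiagonal_R_zero_mul_R_zero {K : Type*} [Field K] [CharZero K] (l : ℕ) :
    ∑ p ∈ antidiagonal l, (R 0 p.1 : K) * R 0 p.2 = (2 ^ (l + 1) - (-2) ^ (l + 1)) / 4 := by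
  have h0 : R 0 0 = 1 := R_zero_two_mul 0
  have h1 : R 0 1 = 0 := R_zero_two_mul_add_one 0
  induction l using Nat.twoStepInduction with
  | zero => norm_num [h0]
  | one => simp [Nat.sum_antidiagonal_succ, h1]
  | more l ih _ =>
    rw [sum_antidiagonal_mul_add_two_of_recurrence (fun m => (R 0 m : K)) 4 (by simp [h1])
      (fun m => by exact_mod_cast R_zero_add_two m), ih]
    ring

theorem sum_range_choose_succ_mul_pow_mul_pow {S : Type*} [CommRing S] (x y : S) (l : ℕ) :
    ∑ k ∈ range (l + 1), (l + 1).choose (k + 1) * x ^ (l - k) * y ^ (k + 1)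
      = (x + y) ^ (l + 1) - x ^ (l + 1) := by
  rw [eq_sub_iff_add_eq, add_comm x y, add_pow, sum_range_succ' _ (l + 1)]
  simp only [pow_zero, one_mul, Nat.choose_zero_right, Nat.cast_one, mul_one, Nat.sub_zero]
  congr 1
  refine sum_congr rfl fun k _ => ?_
  rw [Nat.add_sub_add_right]
  ring

theorem stmt12 (t l : ℕ) :
    (∑ i ∈ Finset.range (l + 1), (R t i * R t (l - i) : ℚ))
      = (((t : ℚ) + 2) ^ (l + 1) - ((t : ℚ) - 2) ^ (l + 1)) / 4 := by
  rw [← Nat.sum_antidiagonal_eq_sum_range_succ (fun i j => (R t i : ℚ) * R t j)]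
  simp only [R_eq_binomTransform (S := ℚ) t]
  rw [sum_antidiagonal_binomTransform_mul]
  simp only [sum_antidiagonal_R_zero_mul_R_zero, mul_div, ← sum_div, mul_sub, sum_sub_distrib,
    sum_range_choose_succ_mul_pow_mul_pow, ← sub_eq_add_neg]
  ring
end

section
/- (André's equality of bad and ugly cases) For α > β ≥ 1, the number of ballot sequences with α votes for A and β for B that start with a vote for B equals the number that start with a vote for A but at some later point have the votes for A and B in balance; both equal C(α+β−1, α). -/
open Finset

namespace Ballot

variable {n : ℕ}

section PartialSums

variable (w : Fin n → ℤ)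

lemma psum_zero : psum w 0 = 0 := by
  simp [psum]

lemma psum_succ {k : ℕ} (hk : k < n) : psum w (k + 1) = psum w k + w ⟨k, hk⟩ := by
  have h : univ.filter (fun i : Fin n => (i : ℕ) < k + 1)
      = insert ⟨k, hk⟩ (univ.filter fun i : Fin n => (i : ℕ) < k) := by
    ext i
    simp only [mem_filter, mem_univ, true_and, mem_insert, Fin.ext_iff]
    omega
  rw [psum, psum, h, sum_insert (by simp), add_comm]

lemma psum_one (hn : 0 < n) : psum w 1 = w ⟨0, hn⟩ := by
  simpa [psum_zero] using psum_succ w hn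

lemma psum_of_le {k : ℕ} (hk : n ≤ k) : psum w k = ∑ i, w i := by
  rw [psum, filter_true_of_mem fun i _ => by omega]

lemma exists_psum_eq_zero (hw : ∀ i, w i ≤ 1) (h1 : psum w 1 < 0) {m : ℕ} (hm : 1 ≤ m)
    (hmn : m ≤ n) (hpos : 0 ≤ psum w m) : ∃ k, 0 < k ∧ k ≤ m ∧ psum w k = 0 := by
  induction m, hm using Nat.le_induction with
  | base => omega
  | succ m hm ih =>
    by_cases hprev : 0 ≤ psum w m
    · obtain ⟨k, hk, hkm, hzero⟩ := ih (by omega) hprev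
      exact ⟨k, hk, by omega, hzero⟩
    · have hstep := psum_succ w (k := m) (by omega)
      have hup := hw ⟨m, by omega⟩
      exact ⟨m + 1, by omega, le_rfl, by omega⟩

end PartialSums

lemma two_mul_card_filter_eq_one {ι : Type*} (s : Finset ι) (w : ι → ℤ)
    (hw : ∀ i ∈ s, w i = 1 ∨ w i = -1) :
    2 * (#(s.filter fun i => w i = 1) : ℤ) = ∑ i ∈ s, w i + #s := by
  have hshift : ∀ i ∈ s, w i + 1 = if w i = 1 then 2 else 0 := by
    intro i hi
    rcases hw i hi with h | h <;> simp [h]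
  rw [card_eq_sum_ones s, Nat.cast_sum, Nat.cast_one, ← sum_add_distrib, sum_congr rfl hshift,
    sum_ite, sum_const_zero, sum_const, nsmul_eq_mul]
  ring

section Reflection

variable (c : ℕ) (w : Fin n → ℤ)

def flipPrefix : Fin n → ℤ := fun i => if (i : ℕ) < c then -w i else w i

lemma flipPrefix_flipPrefix : flipPrefix c (flipPrefix c w) = w := by
  funext i
  by_cases h : (i : ℕ) < c <;> simp [flipPrefix, h]

lemma flipPrefix_eq_one_or_eq_neg_one (hw : ∀ i, w i = 1 ∨ w i = -1) (i : Fin n) :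
    flipPrefix c w i = 1 ∨ flipPrefix c w i = -1 := by
  unfold flipPrefix
  split_ifs <;> rcases hw i with h | h <;> simp [h]

lemma psum_flipPrefix (k : ℕ) :
    psum (flipPrefix c w) k = psum w k - 2 * psum w (min k c) := by
  have hterm : ∀ i : Fin n, flipPrefix c w i = w i - 2 * if (i : ℕ) < c then w i else 0 := by
    intro i
    simp only [flipPrefix]
    split_ifs <;> ring
  simp only [psum, hterm, sum_sub_distrib, ← mul_sum, ← sum_filter, filter_filter, lt_min_iff]

lemma psum_flipPrefix_of_psum_eq_zero (hc : psum w c = 0) (k : ℕ) :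
    psum (flipPrefix c w) k = if k < c then -psum w k else psum w k := by
  rw [psum_flipPrefix]
  split_ifs with hk
  · rw [min_eq_left hk.le]
    ring
  · rw [min_eq_right (not_lt.mp hk), hc]
    ring

end Reflection

section FirstBalance

variable (w : Fin n → ℤ)

def balanceTimes : Set ℕ := {k | 0 < k ∧ k ≤ n ∧ psum w k = 0}

/-- `sInf ∅ = 0`: if `w` never balances, then `firstBalance w = 0` and `reflect w = w`. -/
noncomputable def firstBalance : ℕ := sInf (balanceTimes w)

noncomputable def reflect : Fin n → ℤ := flipPrefix (firstBalance w) w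

lemma firstBalance_le : firstBalance w ≤ n := by
  rcases (balanceTimes w).eq_empty_or_nonempty with h | h
  · simp [firstBalance, h]
  · exact (Nat.sInf_mem h).2.1

lemma psum_firstBalance : psum w (firstBalance w) = 0 := by
  rcases (balanceTimes w).eq_empty_or_nonempty with h | h
  · simp [firstBalance, h, psum_zero]
  · exact (Nat.sInf_mem h).2.2

lemma psum_reflect (k : ℕ) :
    psum (reflect w) k = if k < firstBalance w then -psum w k else psum w k :=
  psum_flipPrefix_of_psum_eq_zero _ w (psum_firstBalance w) k

lemma balanceTimes_reflect : balanceTimes (reflect w) = balanceTimes w := by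
  ext k
  simp only [balanceTimes, Set.mem_ofPred_eq, psum_reflect]
  split_ifs <;> simp

lemma reflect_involutive : Function.Involutive (reflect : (Fin n → ℤ) → Fin n → ℤ) := by
  intro w
  rw [reflect, firstBalance, balanceTimes_reflect, ← firstBalance, reflect, flipPrefix_flipPrefix]

lemma psum_reflect_one (h : (balanceTimes w).Nonempty) : psum (reflect w) 1 = -psum w 1 := by
  have hpos : 0 < firstBalance w := (Nat.sInf_mem h).1
  rw [psum_reflect]
  split_ifs with h1
  · rfl
  · have hfirst : firstBalance w = 1 := by omega
    rw [← hfirst, psum_firstBalance, neg_zero]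

lemma card_filter_reflect_eq_one (hw : ∀ i, w i = 1 ∨ w i = -1) :
    #(univ.filter fun i => reflect w i = 1) = #(univ.filter fun i => w i = 1) := by
  have hsum : ∑ i, reflect w i = ∑ i, w i := by
    rw [← psum_of_le (reflect w) le_rfl, psum_reflect, if_neg (firstBalance_le w).not_gt,
      psum_of_le w le_rfl]
  have hrw := two_mul_card_filter_eq_one univ (reflect w)
    fun i _ => flipPrefix_eq_one_or_eq_neg_one _ w hw i
  have hw' := two_mul_card_filter_eq_one univ w fun i _ => hw i
  omega

end FirstBalance

section Ballots

variable {a : ℕ} {w : Fin n → ℤ}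

def badBallots (n a : ℕ) : Set (Fin n → ℤ) :=
  {w | (∀ i, w i = 1 ∨ w i = -1) ∧ #(univ.filter fun i => w i = 1) = a ∧ psum w 1 = -1}

def uglyBallots (n a : ℕ) : Set (Fin n → ℤ) :=
  {w | (∀ i, w i = 1 ∨ w i = -1) ∧ #(univ.filter fun i => w i = 1) = a ∧ psum w 1 = 1 ∧
    (balanceTimes w).Nonempty}

lemma balanceTimes_nonempty (h : n < 2 * a) (hw : w ∈ badBallots n a) :
    (balanceTimes w).Nonempty := by
  obtain ⟨hsign, hcard, h1⟩ := hw
  have htotal := two_mul_card_filter_eq_one univ w fun i _ => hsign i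
  rw [hcard, card_univ, Fintype.card_fin, ← psum_of_le w le_rfl] at htotal
  have hn : 1 ≤ n := Nat.pos_of_ne_zero (by rintro rfl; simp [psum] at h1)
  exact exists_psum_eq_zero w (fun i => (hsign i).elim le_of_eq (by omega)) (by omega) hn le_rfl
    (by omega)

lemma reflect_mem_uglyBallots (h : n < 2 * a) (hw : w ∈ badBallots n a) :
    reflect w ∈ uglyBallots n a := by
  have hbal := balanceTimes_nonempty h hw
  obtain ⟨hsign, hcard, h1⟩ := hw
  refine ⟨flipPrefix_eq_one_or_eq_neg_one _ w hsign, ?_, ?_, ?_⟩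
  · rw [card_filter_reflect_eq_one w hsign, hcard]
  · rw [psum_reflect_one w hbal, h1, neg_neg]
  · rwa [balanceTimes_reflect]

lemma reflect_mem_badBallots (hw : w ∈ uglyBallots n a) : reflect w ∈ badBallots n a := by
  obtain ⟨hsign, hcard, h1, hbal⟩ := hw
  refine ⟨flipPrefix_eq_one_or_eq_neg_one _ w hsign, ?_, ?_⟩
  · rw [card_filter_reflect_eq_one w hsign, hcard]
  · rw [psum_reflect_one w hbal, h1]

lemma image_reflect_badBallots (h : n < 2 * a) : reflect '' badBallots n a = uglyBallots n a := by
  rw [reflect_involutive.image_eq_preimage_symm]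
  ext v
  refine ⟨fun hv => ?_, reflect_mem_badBallots⟩
  simpa only [reflect_involutive v] using reflect_mem_uglyBallots h hv

lemma ncard_uglyBallots (h : n < 2 * a) : (uglyBallots n a).ncard = (badBallots n a).ncard := by
  rw [← image_reflect_badBallots h, Set.ncard_image_of_injective _ reflect_involutive.injective]

end Ballots

section Counting

def signSeq (s : Finset (Fin n)) : Fin n → ℤ := fun i => if i ∈ s then 1 else -1

lemma signSeq_injective : Function.Injective (signSeq (n := n)) := by
  intro s t hst
  ext i
  have hi := congrFun hst i
  by_cases hs : i ∈ s <;> by_cases ht : i ∈ t <;> simp_all [signSeq]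

lemma filter_signSeq_eq_one (s : Finset (Fin n)) : univ.filter (fun i => signSeq s i = 1) = s := by
  ext i
  by_cases hi : i ∈ s <;> simp [signSeq, hi]

lemma signSeq_filter_eq_one {w : Fin n → ℤ} (hw : ∀ i, w i = 1 ∨ w i = -1) :
    signSeq (univ.filter fun i => w i = 1) = w := by
  funext i
  rcases hw i with h | h <;> simp [signSeq, h]

lemma badBallots_eq_image (a : ℕ) (hn : 0 < n) :
    badBallots n a = signSeq '' ↑((univ.erase (⟨0, hn⟩ : Fin n)).powersetCard a) := by
  ext w
  simp only [badBallots, Set.mem_ofPred_eq, Set.mem_image, mem_coe, mem_powersetCard,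
    psum_one _ hn]
  constructor
  · rintro ⟨hsign, hcard, h0⟩
    refine ⟨_, ⟨fun i hi => ?_, hcard⟩, signSeq_filter_eq_one hsign⟩
    rw [mem_erase]
    refine ⟨fun hi0 => ?_, mem_univ i⟩
    rw [mem_filter, hi0, h0] at hi
    simp at hi
  · rintro ⟨s, ⟨hs, hcard⟩, rfl⟩
    have h0 : (⟨0, hn⟩ : Fin n) ∉ s := fun h => by simpa using hs h
    refine ⟨fun i => ?_, by rw [filter_signSeq_eq_one, hcard], by simp [signSeq, h0]⟩
    by_cases hi : i ∈ s <;> simp [signSeq, hi]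

lemma ncard_badBallots (a : ℕ) (hn : 0 < n) : (badBallots n a).ncard = (n - 1).choose a := by
  rw [badBallots_eq_image a hn, Set.ncard_image_of_injective _ signSeq_injective,
    Set.ncard_coe_finset, card_powersetCard, card_erase_of_mem (mem_univ _), card_univ,
    Fintype.card_fin]

end Counting

end Ballot

theorem stmt17_general (α β : ℕ) (h : β < α) :
    {w : Fin (α + β) → ℤ |
        (∀ i, w i = 1 ∨ w i = -1) ∧
          (Finset.univ.filter (fun i => w i = 1)).card = α ∧
          psum w 1 = -1}.ncard
      = {w : Fin (α + β) → ℤ |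
          (∀ i, w i = 1 ∨ w i = -1) ∧
            (Finset.univ.filter (fun i => w i = 1)).card = α ∧
            psum w 1 = 1 ∧ (∃ k, 0 < k ∧ k ≤ α + β ∧ psum w k = 0)}.ncard
    ∧ {w : Fin (α + β) → ℤ |
        (∀ i, w i = 1 ∨ w i = -1) ∧
          (Finset.univ.filter (fun i => w i = 1)).card = α ∧
          psum w 1 = -1}.ncard
      = Nat.choose (α + β - 1) α :=
  ⟨(Ballot.ncard_uglyBallots (n := α + β) (a := α) (by omega)).symm,
    Ballot.ncard_badBallots α (by omega)⟩

theorem stmt17 (α β : ℕ) (hβ : 1 ≤ β) (h : β < α) :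
    {w : Fin (α + β) → ℤ |
        (∀ i, w i = 1 ∨ w i = -1) ∧
          (Finset.univ.filter (fun i => w i = 1)).card = α ∧
          psum w 1 = -1}.ncard
      = {w : Fin (α + β) → ℤ |
          (∀ i, w i = 1 ∨ w i = -1) ∧
            (Finset.univ.filter (fun i => w i = 1)).card = α ∧
            psum w 1 = 1 ∧ (∃ k, 0 < k ∧ k ≤ α + β ∧ psum w k = 0)}.ncard
    ∧ {w : Fin (α + β) → ℤ |
        (∀ i, w i = 1 ∨ w i = -1) ∧
          (Finset.univ.filter (fun i => w i = 1)).card = α ∧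
          psum w 1 = -1}.ncard
      = Nat.choose (α + β - 1) α :=
  stmt17_general α β h
end

section
/- For ±1-walks of length n starting at 0 and ending at n mod 2 ∈ {0,1}, and 0 ≤ d ≤ ⌊n/2⌋: the number of such walks whose partial sum sequence contains at least d alternating visits (read backwards) to 1 and −1, ending (in the backward reading) with a visit to −1, equals C(n, ⌈n/2⌉ + d). -/
/-!
Reflecting a walk after its last visit to `-1` does not move that last visit, so it is an
involution. It maps the walks ending at `c ≥ 0` with `d + 1` backward alternating visits
`-1, 1, -1, …` onto the walks ending at `-2 - c` with `d` such visits starting with `1`: the first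
backward visit to `-1` becomes the reflection point, and conversely a walk ending at or below `-1`
visits `-1` after every time it is above `-1`, so all its visits lie before the reflection point.
After negation, one visit is thus traded for a shift of the endpoint by `2`, and the count is that
of all walks ending at `n % 2 + 2 d`, namely `C(n, ⌈n/2⌉ + d)`.
-/

namespace SignWalk

variable {n : ℕ}

def IsStepWalk (w : Fin n → ℤ) : Prop := ∀ i, w i = 1 ∨ w i = -1

def HasAltVisits (w : Fin n → ℤ) (d : ℕ) (ε : ℤ) : Prop :=
  ∃ f : Fin d → ℕ, StrictAnti f ∧ (∀ j, f j ≤ n) ∧ ∀ j : Fin d, psum w (f j) = ε * (-1) ^ (j : ℕ)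

lemma hasAltVisits_zero (w : Fin n → ℤ) (ε : ℤ) : HasAltVisits w 0 ε :=
  ⟨Fin.elim0, fun a => a.elim0, fun a => a.elim0, fun a => a.elim0⟩

def walksWith (n : ℕ) (c : ℤ) (d : ℕ) (ε : ℤ) : Set (Fin n → ℤ) :=
  {w | IsStepWalk w ∧ psum w n = c ∧ HasAltVisits w d ε}

lemma psum_zero (w : Fin n → ℤ) : psum w 0 = 0 := by simp [psum]

lemma psum_succ (w : Fin n → ℤ) {k : ℕ} (hk : k < n) :
    psum w (k + 1) = psum w k + w ⟨k, hk⟩ := by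
  have : Finset.univ.filter (fun i : Fin n => (i : ℕ) < k + 1)
      = insert ⟨k, hk⟩ (Finset.univ.filter (fun i : Fin n => (i : ℕ) < k)) := by
    ext i
    simp only [Finset.mem_filter, Finset.mem_univ, true_and, Finset.mem_insert, Fin.ext_iff]
    omega
  rw [psum, this, Finset.sum_insert (by simp), add_comm, psum]

lemma psum_neg (w : Fin n → ℤ) (k : ℕ) : psum (-w) k = -psum w k := by
  simp [psum]

lemma psum_self (w : Fin n → ℤ) : psum w n = ∑ i, w i := by
  simp [psum]

lemma exists_psum_eq_of_le_of_le {w : Fin n → ℤ} (hw : IsStepWalk w) {a b : ℕ} (hab : a ≤ b)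
    (hbn : b ≤ n) {x : ℤ} (hb : psum w b ≤ x) (ha : x ≤ psum w a) :
    ∃ k, a ≤ k ∧ k ≤ b ∧ psum w k = x := by
  induction b, hab using Nat.le_induction with
  | base => exact ⟨a, le_rfl, le_rfl, le_antisymm hb ha⟩
  | succ b hab ih =>
    rw [psum_succ w hbn] at hb
    by_cases hx : psum w b ≤ x
    · obtain ⟨k, hak, hkb, hk⟩ := ih (Nat.le_of_succ_le hbn) hx
      exact ⟨k, hak, hkb.trans b.le_succ, hk⟩
    · refine ⟨b + 1, by omega, le_rfl, ?_⟩
      rw [psum_succ w hbn]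
      rcases hw ⟨b, hbn⟩ with h | h <;> rw [h] at hb ⊢ <;> omega

section Reflection

def reflectAfter (t : ℕ) (w : Fin n → ℤ) : Fin n → ℤ :=
  fun i => if (i : ℕ) < t then w i else -w i

lemma reflectAfter_reflectAfter (t : ℕ) (w : Fin n → ℤ) :
    reflectAfter t (reflectAfter t w) = w := by
  funext i
  simp only [reflectAfter]
  split_ifs <;> simp

lemma IsStepWalk.reflectAfter {w : Fin n → ℤ} (hw : IsStepWalk w) (t : ℕ) :
    IsStepWalk (reflectAfter t w) := by
  intro i
  unfold SignWalk.reflectAfter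
  rcases hw i with h | h <;> split_ifs <;> simp [h]

lemma psum_reflectAfter (t : ℕ) (w : Fin n → ℤ) (k : ℕ) :
    psum (reflectAfter t w) k = 2 * psum w (min k t) - psum w k := by
  have hsplit := Finset.sum_filter_add_sum_filter_not
    (Finset.univ.filter (fun i : Fin n => (i : ℕ) < k)) (fun i => (i : ℕ) < t) w
  have hmin : (Finset.univ.filter (fun i : Fin n => (i : ℕ) < k)).filter
      (fun i : Fin n => (i : ℕ) < t) = Finset.univ.filter (fun i : Fin n => (i : ℕ) < min k t) := by
    simp only [Finset.filter_filter, lt_min_iff]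
  simp only [psum, reflectAfter, Finset.sum_ite, Finset.sum_neg_distrib, hmin] at hsplit ⊢
  linarith

/-- Junk value `0` if the walk never visits `-1`. -/
def lastNegOneVisit (w : Fin n → ℤ) : ℕ := Nat.findGreatest (fun k => psum w k = -1) n

def reflection (w : Fin n → ℤ) : Fin n → ℤ := reflectAfter (lastNegOneVisit w) w

variable {w : Fin n → ℤ}

lemma lastNegOneVisit_le (w : Fin n → ℤ) : lastNegOneVisit w ≤ n := Nat.findGreatest_le n

lemma psum_lastNegOneVisit {k : ℕ} (hk : k ≤ n) (h : psum w k = -1) :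
    psum w (lastNegOneVisit w) = -1 :=
  Nat.findGreatest_spec (P := fun k => psum w k = -1) hk h

lemma le_lastNegOneVisit {k : ℕ} (hk : k ≤ n) (h : psum w k = -1) : k ≤ lastNegOneVisit w :=
  Nat.le_findGreatest hk h

lemma lt_lastNegOneVisit (hw : IsStepWalk w) (hend : psum w n ≤ -1) {k : ℕ} (hk : k ≤ n)
    (habove : -1 < psum w k) : k < lastNegOneVisit w := by
  obtain ⟨m, hkm, hmn, hm⟩ := exists_psum_eq_of_le_of_le hw hk le_rfl hend habove.le
  have : k ≠ m := by rintro rfl; omega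
  exact lt_of_lt_of_le (lt_of_le_of_ne hkm this) (le_lastNegOneVisit hmn hm)

lemma psum_reflection_of_le {k : ℕ} (hk : k ≤ lastNegOneVisit w) :
    psum (reflection w) k = psum w k := by
  rw [reflection, psum_reflectAfter, min_eq_left hk]
  ring

lemma psum_reflection_of_ge (hvisit : psum w (lastNegOneVisit w) = -1) {k : ℕ}
    (hk : lastNegOneVisit w ≤ k) : psum (reflection w) k = -2 - psum w k := by
  rw [reflection, psum_reflectAfter, min_eq_right hk, hvisit]
  ring

lemma lastNegOneVisit_reflection {k : ℕ} (hk : k ≤ n) (h : psum w k = -1) :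
    lastNegOneVisit (reflection w) = lastNegOneVisit w := by
  -- beyond the reflection point `-2 - s = -1` exactly when `s = -1`
  have hvisit := psum_lastNegOneVisit hk h
  refine Nat.findGreatest_eq_iff.mpr ⟨lastNegOneVisit_le w, fun _ => ?_, fun m hm hmn hrefl => ?_⟩
  · rw [psum_reflection_of_ge hvisit le_rfl, hvisit]
    norm_num
  · rw [psum_reflection_of_ge hvisit hm.le] at hrefl
    exact Nat.findGreatest_is_greatest hm hmn (show psum w m = -1 by omega)

lemma reflection_reflection {k : ℕ} (hk : k ≤ n) (h : psum w k = -1) :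
    reflection (reflection w) = w := by
  rw [reflection, lastNegOneVisit_reflection hk h]
  exact reflectAfter_reflectAfter _ w

end Reflection

section Counting

variable {c : ℤ} {d : ℕ}

lemma mapsTo_reflection_walksWith_succ :
    Set.MapsTo reflection (walksWith n c (d + 1) (-1)) (walksWith n (-2 - c) d 1) := by
  rintro w ⟨hw, hend, f, hanti, hle, hval⟩
  have hf0 : psum w (f 0) = -1 := by simpa using hval 0
  have hvisit := psum_lastNegOneVisit (hle 0) hf0
  refine ⟨hw.reflectAfter _, ?_, Fin.tail f, hanti.comp_strictMono (Fin.strictMono_succ),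
    fun j => hle j.succ, fun j => ?_⟩
  · rw [psum_reflection_of_ge hvisit (lastNegOneVisit_le w), hend]
  · have hjt : f j.succ ≤ lastNegOneVisit w :=
      ((hanti (Fin.succ_pos j)).trans_le (le_lastNegOneVisit (hle 0) hf0)).le
    rw [Fin.tail, psum_reflection_of_le hjt, hval, Fin.val_succ, pow_succ]
    ring

lemma mapsTo_reflection_walksWith_pred (hc : 0 ≤ c) :
    Set.MapsTo reflection (walksWith n (-2 - c) d 1) (walksWith n c (d + 1) (-1)) := by
  rintro v ⟨hv, hend, g, hanti, hle, hval⟩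
  have hend' : psum v n ≤ -1 := by omega
  have hpos : 0 < lastNegOneVisit v :=
    lt_lastNegOneVisit hv hend' n.zero_le (by rw [psum_zero]; norm_num)
  have hvisit : psum v (lastNegOneVisit v) = -1 := Nat.findGreatest_of_ne_zero rfl hpos.ne'
  have hgt : ∀ j, g j < lastNegOneVisit v := fun j => by
    have hfirst : g ⟨0, j.pos⟩ < lastNegOneVisit v :=
      lt_lastNegOneVisit hv hend' (hle _) (by rw [hval]; norm_num)
    exact (hanti.antitone (Nat.zero_le _)).trans_lt hfirst
  refine ⟨hv.reflectAfter _, ?_, Fin.cons (lastNegOneVisit v) g, ?_, ?_, ?_⟩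
  · rw [psum_reflection_of_ge hvisit (lastNegOneVisit_le v), hend]
    ring
  · exact (Fin.liftFun_cons (· > ·)).mpr ⟨hgt, hanti⟩
  · exact Fin.cases (lastNegOneVisit_le v) hle
  · refine Fin.cases ?_ fun j => ?_
    · simp [psum_reflection_of_ge hvisit le_rfl, hvisit]
    · rw [Fin.cons_succ, psum_reflection_of_le (hgt j).le, hval, Fin.val_succ, pow_succ]
      ring

lemma ncard_walksWith_succ (hc : 0 ≤ c) :
    (walksWith n c (d + 1) (-1)).ncard = (walksWith n (-2 - c) d 1).ncard := by
  have hinv : Set.InvOn reflection reflection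
      (walksWith n c (d + 1) (-1)) (walksWith n (-2 - c) d 1) := by
    constructor
    · rintro w ⟨-, -, f, -, hle, hval⟩
      exact reflection_reflection (hle 0) (by simpa using hval 0)
    · rintro v ⟨hv, hend, -⟩
      obtain ⟨k, -, hk, hkv⟩ := exists_psum_eq_of_le_of_le hv n.zero_le le_rfl
        (show psum v n ≤ -1 by omega) (by rw [psum_zero]; norm_num)
      exact reflection_reflection hk hkv
  exact (hinv.bijOn mapsTo_reflection_walksWith_succ
    (mapsTo_reflection_walksWith_pred hc)).ncard_eq

lemma IsStepWalk.neg {w : Fin n → ℤ} (hw : IsStepWalk w) : IsStepWalk (-w) := by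
  intro i
  rcases hw i with h | h <;> simp [h]

lemma HasAltVisits.neg {w : Fin n → ℤ} {ε : ℤ} (hw : HasAltVisits w d ε) :
    HasAltVisits (-w) d (-ε) := by
  obtain ⟨f, hanti, hle, hval⟩ := hw
  exact ⟨f, hanti, hle, fun j => by rw [psum_neg, hval, neg_mul]⟩

lemma neg_mem_walksWith {w : Fin n → ℤ} {ε : ℤ} (hw : w ∈ walksWith n c d ε) :
    -w ∈ walksWith n (-c) d (-ε) :=
  ⟨hw.1.neg, by rw [psum_neg, hw.2.1], hw.2.2.neg⟩

lemma neg_walksWith (ε : ℤ) : -walksWith n c d ε = walksWith n (-c) d (-ε) := by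
  ext w
  refine ⟨fun hw => by simpa using neg_mem_walksWith hw, fun hw => ?_⟩
  simpa using neg_mem_walksWith hw

lemma ncard_walksWith (hc : 0 ≤ c) :
    (walksWith n c d (-1)).ncard = (walksWith n (c + 2 * d) 0 (-1)).ncard := by
  induction d generalizing c with
  | zero => simp
  | succ d ih =>
    rw [ncard_walksWith_succ hc, ← Set.ncard_neg, neg_walksWith, ih (by omega)]
    congr 2
    push_cast
    ring

def ofUpSteps (S : Finset (Fin n)) : Fin n → ℤ := fun i => if i ∈ S then 1 else -1

lemma ofUpSteps_injective : Function.Injective (ofUpSteps (n := n)) := by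
  intro S T h
  ext i
  have := congrFun h i
  simp only [ofUpSteps] at this
  split_ifs at this <;> simp_all

lemma IsStepWalk.ofUpSteps (S : Finset (Fin n)) : IsStepWalk (ofUpSteps S) := by
  intro i
  unfold SignWalk.ofUpSteps
  split_ifs <;> simp

lemma psum_ofUpSteps (S : Finset (Fin n)) : psum (ofUpSteps S) n = 2 * S.card - n := by
  have hsplit := Finset.card_filter_add_card_filter_not (s := Finset.univ) (· ∈ S)
  simp only [psum_self, ofUpSteps, Finset.sum_ite, Finset.sum_const, Finset.filter_mem_eq_inter,
    Finset.univ_inter, Finset.card_univ, Fintype.card_fin, Int.nsmul_eq_mul, mul_one, mul_neg]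
    at hsplit ⊢
  omega

lemma ofUpSteps_filter_eq_one {w : Fin n → ℤ} (hw : IsStepWalk w) :
    ofUpSteps (Finset.univ.filter (w · = 1)) = w := by
  funext i
  rcases hw i with h | h <;> simp [ofUpSteps, h]

lemma ncard_walksWith_zero (k : ℕ) (ε : ℤ) :
    (walksWith n (2 * k - n) 0 ε).ncard = n.choose k := by
  have himage : ofUpSteps '' ↑(Finset.powersetCard k (Finset.univ : Finset (Fin n)))
      = walksWith n (2 * k - n) 0 ε := by
    ext w
    constructor
    · rintro ⟨S, hS, rfl⟩
      rw [Finset.mem_coe, Finset.mem_powersetCard_univ] at hS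
      exact ⟨.ofUpSteps S, by rw [psum_ofUpSteps, hS], hasAltVisits_zero _ ε⟩
    · rintro ⟨hw, hend, -⟩
      refine ⟨_, ?_, ofUpSteps_filter_eq_one hw⟩
      have := psum_ofUpSteps (Finset.univ.filter (w · = 1))
      rw [ofUpSteps_filter_eq_one hw, hend] at this
      rw [Finset.mem_coe, Finset.mem_powersetCard_univ]
      omega
  rw [← himage, Set.ncard_image_of_injective _ ofUpSteps_injective, Set.ncard_coe_finset,
    Finset.card_powersetCard, Finset.card_univ, Fintype.card_fin]

end Counting

end SignWalk

open SignWalk in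
theorem stmt18_general (n d : ℕ) :
    {w : Fin n → ℤ |
        (∀ i, w i = 1 ∨ w i = -1) ∧
          psum w n = (n % 2 : ℤ) ∧
          (∃ f : Fin d → ℕ, StrictAnti f ∧ (∀ j, f j ≤ n) ∧
            ∀ j : Fin d, psum w (f j) = (-1 : ℤ) ^ ((j : ℕ) + 1))}.ncard
      = Nat.choose n ((n + 1) / 2 + d) := by
  have hend : (n % 2 : ℤ) + 2 * d = 2 * ((n + 1) / 2 + d : ℕ) - n := by
    push_cast
    omega
  rw [← ncard_walksWith_zero (ε := -1), ← hend, ← ncard_walksWith (by omega)]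
  simp only [walksWith, IsStepWalk, HasAltVisits, pow_succ']

theorem stmt18 (n d : ℕ) (hd : d ≤ n / 2) :
    {w : Fin n → ℤ |
        (∀ i, w i = 1 ∨ w i = -1) ∧
          psum w n = (n % 2 : ℤ) ∧
          (∃ f : Fin d → ℕ, StrictAnti f ∧ (∀ j, f j ≤ n) ∧
            ∀ j : Fin d, psum w (f j) = (-1 : ℤ) ^ ((j : ℕ) + 1))}.ncard
      = Nat.choose n ((n + 1) / 2 + d) :=
  stmt18_general n d
end
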